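/- arXiv:2506.04945 — 5 statements merged into one kernel-verified Lean document; each statement's English description precedes it below -/
import Mathlib

section
/- Assume the support condition: for every action profile a : Fin K → α, P({A = a}) > 0 ↔ P({Ā = a}) > 0, and P({A = a}) > 0 ↔ P({Ã^j = a}) > 0 for every index j. Suppose an estimator family f̂ : Fin K → (Fin K → α) → Bool → ℝ satisfies the fitting equations: for every a with P({A = a}) > 0, Σ_k f̂_k a false = E[Y | {A = a}]; and for every j and every a with P({Ã^j = a}) > 0, f̂_j a true + Σ_{k ≠ j} f̂_k a false = E[Ỹ^j | {Ã^j = a}]. Then for every a with P({Ā = a}) > 0: Σ_k f̂_k a true = E[Ȳ | {Ā = a}]. In words: the joint interventional effect is identified from the observational and single-intervention conditional expectations. -/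
open MeasureTheory ProbabilityTheory
open scoped ENNReal

/-- Codomain family for the exogenous noises `W₀,…,W_{K-1}, V₀,…,V_{K-1}, ξ₀,…,ξ_{K-1}, U`. -/
def NoiseCodom (K : ℕ) (α β γ : Type) : Fin K ⊕ Fin K ⊕ Fin K ⊕ Unit → Type :=
  Sum.elim (fun _ => γ) (Sum.elim (fun _ => β) (Sum.elim (fun _ => α) fun _ => ℝ))

/-- The measurable-space structure on each noise codomain. -/
def noiseMS (K : ℕ) (α β γ : Type) [MeasurableSpace α] [MeasurableSpace β]
    [MeasurableSpace γ] : (i : Fin K ⊕ Fin K ⊕ Fin K ⊕ Unit) →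
      MeasurableSpace (NoiseCodom K α β γ i)
  | .inl _ => inferInstanceAs (MeasurableSpace γ)
  | .inr (.inl _) => inferInstanceAs (MeasurableSpace β)
  | .inr (.inr (.inl _)) => inferInstanceAs (MeasurableSpace α)
  | .inr (.inr (.inr _)) => inferInstanceAs (MeasurableSpace ℝ)

/-- The family of all exogenous noise variables, as a single indexed family. -/
def noiseFam {Ω α β γ : Type} {K : ℕ} (W : Fin K → Ω → γ) (V : Fin K → Ω → β)
    (ξ : Fin K → Ω → α) (U : Ω → ℝ) :
    (i : Fin K ⊕ Fin K ⊕ Fin K ⊕ Unit) → Ω → NoiseCodom K α β γ i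
  | .inl k => W k
  | .inr (.inl k) => V k
  | .inr (.inr (.inl k)) => ξ k
  | .inr (.inr (.inr _)) => U

/-- Observational actions: `A_k := g_k((A_i)_{i<k}, C_k, V_k)` with `C_k := W_k`. -/
def Aobs {Ω α β γ : Type} {K : ℕ}
    (g : (k : Fin K) → ((i : Fin K) → i < k → α) → γ → β → α)
    (W : Fin K → Ω → γ) (V : Fin K → Ω → β) (k : Fin K) (ω : Ω) : α :=
  g k (fun i _ => Aobs g W V i ω) (W k ω) (V k ω)
termination_by k.1
decreasing_by exact ‹_ < k›

/-- Single-intervention actions `do(A_j)`: `Ã^j_j := ξ_j`, and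
`Ã^j_k := g_k((Ã^j_i)_{i<k}, C_k, V_k)` for `k ≠ j`. -/
def Asingle {Ω α β γ : Type} {K : ℕ}
    (g : (k : Fin K) → ((i : Fin K) → i < k → α) → γ → β → α)
    (W : Fin K → Ω → γ) (V : Fin K → Ω → β) (ξ : Fin K → Ω → α)
    (j : Fin K) (k : Fin K) (ω : Ω) : α :=
  if k = j then ξ j ω
  else g k (fun i _ => Asingle g W V ξ j i ω) (W k ω) (V k ω)
termination_by k.1
decreasing_by exact ‹_ < k›

/-- Mixed-intervention actions `do(A_S)`: `Â^S_k := ξ_k` for `k ∈ S`, and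
`Â^S_k := g_k((Â^S_i)_{i<k}, C_k, V_k)` for `k ∉ S`. -/
def Amix {Ω α β γ : Type} {K : ℕ}
    (g : (k : Fin K) → ((i : Fin K) → i < k → α) → γ → β → α)
    (W : Fin K → Ω → γ) (V : Fin K → Ω → β) (ξ : Fin K → Ω → α)
    (S : Finset (Fin K)) (k : Fin K) (ω : Ω) : α :=
  if k ∈ S then ξ k ω
  else g k (fun i _ => Amix g W V ξ S i ω) (W k ω) (V k ω)
termination_by k.1
decreasing_by exact ‹_ < k›

/-- The additive outcome `Y := Σ_k f_k(A_k, C_k) + U` for a given family of actions. -/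
def outcome {Ω α γ : Type} {K : ℕ} (f : Fin K → α → γ → ℝ)
    (A : Fin K → Ω → α) (W : Fin K → Ω → γ) (U : Ω → ℝ) (ω : Ω) : ℝ :=
  (∑ k, f k (A k ω) (W k ω)) + U ω

/-- The event `{A = a} = ⋂_k {A_k = a_k}`. -/
def eventEq {Ω α : Type} {K : ℕ} (A : Fin K → Ω → α) (a : Fin K → α) : Set Ω :=
  ⋂ k, {ω | A k ω = a k}

section Struct
variable {Ω α β γ : Type} {K : ℕ}
  (g : (k : Fin K) → ((i : Fin K) → i < k → α) → γ → β → α)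
  (W : Fin K → Ω → γ) (V : Fin K → Ω → β) (ξ : Fin K → Ω → α)
  (a : Fin K → α)

lemma Aobs_eq (k : Fin K) (ω : Ω) :
    Aobs g W V k ω = g k (fun i _ => Aobs g W V i ω) (W k ω) (V k ω) := by
  rw [Aobs]

lemma Asingle_eq (j k : Fin K) (ω : Ω) :
    Asingle g W V ξ j k ω
      = if k = j then ξ j ω
        else g k (fun i _ => Asingle g W V ξ j i ω) (W k ω) (V k ω) := by
  rw [Asingle]

lemma eventEq_obs :
    eventEq (Aobs g W V) a
      = ⋂ k, {ω | g k (fun i _ => a i) (W k ω) (V k ω) = a k} := by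
  ext ω
  simp only [eventEq, Set.mem_iInter, Set.mem_setOf_eq]
  constructor
  · intro h k
    have hpre : (fun i (_ : i < k) => a i) = (fun i (_ : i < k) => Aobs g W V i ω) :=
      funext fun i => funext fun _ => (h i).symm
    rw [hpre, ← Aobs_eq g W V k ω]; exact h k
  · intro h
    have main : ∀ n (k : Fin K), k.1 < n → Aobs g W V k ω = a k := by
      intro n
      induction n with
      | zero => intro k hk; omega
      | succ n IH =>
        intro k hk
        rw [Aobs_eq]
        have hpre : (fun i (_ : i < k) => Aobs g W V i ω) = fun i (_ : i < k) => a i :=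
          funext fun i => funext fun hi => IH i (by omega)
        rw [hpre]; exact h k
    exact fun k => main K k k.2

lemma eventEq_single (j : Fin K) :
    eventEq (Asingle g W V ξ j) a
      = ⋂ k, (if k = j then {ω | ξ j ω = a j}
          else {ω | g k (fun i _ => a i) (W k ω) (V k ω) = a k}) := by
  ext ω
  simp only [eventEq, Set.mem_iInter]
  constructor
  · intro h k
    have hk := h k
    simp only [Set.mem_setOf_eq] at hk
    by_cases hkj : k = j
    · subst hkj
      rw [if_pos rfl]
      show ξ k ω = a k
      rwa [Asingle_eq, if_pos rfl] at hk
    · rw [if_neg hkj]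
      show g k (fun i _ => a i) (W k ω) (V k ω) = a k
      have hpre : (fun i (_ : i < k) => a i)
          = (fun i (_ : i < k) => Asingle g W V ξ j i ω) :=
        funext fun i => funext fun _ => by
          have := h i; simp only [Set.mem_setOf_eq] at this; exact this.symm
      rw [Asingle_eq, if_neg hkj] at hk
      rw [hpre]; exact hk
  · intro h
    have main : ∀ n (k : Fin K), k.1 < n → Asingle g W V ξ j k ω = a k := by
      intro n
      induction n with
      | zero => intro k hk; omega
      | succ n IH =>
        intro k hk
        by_cases hkj : k = j
        · subst hkj
          have hk := h k; rw [if_pos rfl] at hk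
          simp only [Set.mem_setOf_eq] at hk
          rw [Asingle_eq, if_pos rfl]; exact hk
        · rw [Asingle_eq, if_neg hkj]
          have hpre : (fun i (_ : i < k) => Asingle g W V ξ j i ω)
              = fun i (_ : i < k) => a i :=
            funext fun i => funext fun hi => IH i (by omega)
          rw [hpre]
          have hk := h k; rw [if_neg hkj] at hk
          simpa only [Set.mem_setOf_eq] using hk
    exact fun k => main K k k.2

lemma eventEq_joint : eventEq ξ a = ⋂ k, {ω | ξ k ω = a k} := rfl

end Struct
/-- Per-coordinate sets used to express atom events in the noise family. -/
def Bsets {K : ℕ} {α β γ : Type} (t : Finset (Fin K)) (x : Fin K → γ × β × α) :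
    (i : Fin K ⊕ Fin K ⊕ Fin K ⊕ Unit) → Set (NoiseCodom K α β γ i)
  | .inl k => if k ∈ t then ({(x k).1} : Set γ) else Set.univ
  | .inr (.inl k) => if k ∈ t then ({(x k).2.1} : Set β) else Set.univ
  | .inr (.inr (.inl k)) => if k ∈ t then ({(x k).2.2} : Set α) else Set.univ
  | .inr (.inr (.inr _)) => (Set.univ : Set ℝ)

section Indep
set_option linter.unusedSectionVars false
variable {Ω : Type} [MeasurableSpace Ω] (P : MeasureTheory.Measure Ω)
  [MeasureTheory.IsProbabilityMeasure P]
  {K : ℕ} {α β γ : Type}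
  [Fintype α] [MeasurableSpace α] [MeasurableSingletonClass α]
  [Fintype β] [MeasurableSpace β] [MeasurableSingletonClass β]
  [Fintype γ] [MeasurableSpace γ] [MeasurableSingletonClass γ]
  {W : Fin K → Ω → γ} {V : Fin K → Ω → β} {ξ : Fin K → Ω → α} {U : Ω → ℝ}

lemma noise_biInter (hindep : iIndepFun (m := noiseMS K α β γ) (noiseFam W V ξ U) P)
    (B : (i : Fin K ⊕ Fin K ⊕ Fin K ⊕ Unit) → Set (NoiseCodom K α β γ i))
    (hB : ∀ i, MeasurableSet[noiseMS K α β γ i] (B i))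
    (s : Finset (Fin K ⊕ Fin K ⊕ Fin K ⊕ Unit)) :
    P (⋂ i ∈ s, noiseFam W V ξ U i ⁻¹' B i)
      = ∏ i ∈ s, P (noiseFam W V ξ U i ⁻¹' B i) :=
  hindep.meas_biInter fun i _ => ⟨B i, hB i, rfl⟩

lemma Bsets_meas (t : Finset (Fin K)) (x : Fin K → γ × β × α) :
    ∀ i, MeasurableSet[noiseMS K α β γ i] (Bsets t x i) := by
  rintro (k | k | k | u)
  · exact @Set.Finite.measurableSet γ _ _ _ (Set.toFinite _)
  · exact @Set.Finite.measurableSet β _ _ _ (Set.toFinite _)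
  · exact @Set.Finite.measurableSet α _ _ _ (Set.toFinite _)
  · exact @MeasurableSet.univ ℝ _

lemma atom_inter (hindep : iIndepFun (m := noiseMS K α β γ) (noiseFam W V ξ U) P)
    (t : Finset (Fin K)) (x : Fin K → γ × β × α) :
    P (⋂ k ∈ t, {ω | (W k ω, V k ω, ξ k ω) = x k})
      = ∏ k ∈ t, (P {ω | W k ω = (x k).1}
          * (P {ω | V k ω = (x k).2.1} * P {ω | ξ k ω = (x k).2.2})) := by
  have hset : (⋂ i ∈ (Finset.univ : Finset (Fin K ⊕ Fin K ⊕ Fin K ⊕ Unit)),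
      noiseFam W V ξ U i ⁻¹' Bsets t x i)
      = ⋂ k ∈ t, {ω | (W k ω, V k ω, ξ k ω) = x k} := by
    ext ω
    simp only [Set.mem_iInter, Finset.mem_univ, forall_true_left, Set.mem_setOf_eq,
      Set.mem_preimage]
    constructor
    · intro hI k hk
      have h1 : W k ω ∈ (if k ∈ t then ({(x k).1} : Set γ) else Set.univ) := hI (.inl k)
      have h2 : V k ω ∈ (if k ∈ t then ({(x k).2.1} : Set β) else Set.univ) :=
        hI (.inr (.inl k))
      have h3 : ξ k ω ∈ (if k ∈ t then ({(x k).2.2} : Set α) else Set.univ) :=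
        hI (.inr (.inr (.inl k)))
      rw [if_pos hk] at h1 h2 h3
      exact Prod.ext_iff.mpr ⟨h1, Prod.ext_iff.mpr ⟨h2, h3⟩⟩
    · rintro h (k | k | k | u)
      · show W k ω ∈ (if k ∈ t then ({(x k).1} : Set γ) else Set.univ)
        split
        · next hk => exact congrArg Prod.fst (h k hk)
        · exact Set.mem_univ _
      · show V k ω ∈ (if k ∈ t then ({(x k).2.1} : Set β) else Set.univ)
        split
        · next hk => exact congrArg (fun p => p.2.1) (h k hk)
        · exact Set.mem_univ _
      · show ξ k ω ∈ (if k ∈ t then ({(x k).2.2} : Set α) else Set.univ)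
        split
        · next hk => exact congrArg (fun p => p.2.2) (h k hk)
        · exact Set.mem_univ _
      · exact Set.mem_univ _
  rw [← hset, noise_biInter P hindep _ (Bsets_meas t x)]
  rw [Fintype.prod_sum_type]
  rw [Fintype.prod_sum_type]
  rw [Fintype.prod_sum_type]
  have hU1 : (∏ u : Unit,
      P (noiseFam W V ξ U (.inr (.inr (.inr u))) ⁻¹' Bsets t x (.inr (.inr (.inr u))))) = 1 := by
    have : ∀ u : Unit,
        noiseFam W V ξ U (.inr (.inr (.inr u))) ⁻¹' Bsets t x (.inr (.inr (.inr u)))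
          = Set.univ := fun u => Set.preimage_univ
    simp [this]
  rw [hU1, mul_one]
  have hWp : ∀ k, P (noiseFam W V ξ U (.inl k) ⁻¹' Bsets t x (.inl k))
      = (if k ∈ t then P {ω | W k ω = (x k).1} else 1) := by
    intro k
    by_cases hk : k ∈ t
    · have hs : noiseFam W V ξ U (.inl k) ⁻¹' Bsets t x (.inl k) = {ω | W k ω = (x k).1} := by
        show W k ⁻¹' (if k ∈ t then ({(x k).1} : Set γ) else Set.univ) = _
        rw [if_pos hk]; rfl
      rw [hs, if_pos hk]
    · have hs : noiseFam W V ξ U (.inl k) ⁻¹' Bsets t x (.inl k) = Set.univ := by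
        show W k ⁻¹' (if k ∈ t then ({(x k).1} : Set γ) else Set.univ) = _
        rw [if_neg hk]; rfl
      rw [hs, if_neg hk, MeasureTheory.measure_univ]
  have hVp : ∀ k, P (noiseFam W V ξ U (.inr (.inl k)) ⁻¹' Bsets t x (.inr (.inl k)))
      = (if k ∈ t then P {ω | V k ω = (x k).2.1} else 1) := by
    intro k
    by_cases hk : k ∈ t
    · have hs : noiseFam W V ξ U (.inr (.inl k)) ⁻¹' Bsets t x (.inr (.inl k))
          = {ω | V k ω = (x k).2.1} := by
        show V k ⁻¹' (if k ∈ t then ({(x k).2.1} : Set β) else Set.univ) = _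
        rw [if_pos hk]; rfl
      rw [hs, if_pos hk]
    · have hs : noiseFam W V ξ U (.inr (.inl k)) ⁻¹' Bsets t x (.inr (.inl k)) = Set.univ := by
        show V k ⁻¹' (if k ∈ t then ({(x k).2.1} : Set β) else Set.univ) = _
        rw [if_neg hk]; rfl
      rw [hs, if_neg hk, MeasureTheory.measure_univ]
  have hξp : ∀ k, P (noiseFam W V ξ U (.inr (.inr (.inl k)))
        ⁻¹' Bsets t x (.inr (.inr (.inl k))))
      = (if k ∈ t then P {ω | ξ k ω = (x k).2.2} else 1) := by
    intro k
    by_cases hk : k ∈ t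
    · have hs : noiseFam W V ξ U (.inr (.inr (.inl k))) ⁻¹' Bsets t x (.inr (.inr (.inl k)))
          = {ω | ξ k ω = (x k).2.2} := by
        show ξ k ⁻¹' (if k ∈ t then ({(x k).2.2} : Set α) else Set.univ) = _
        rw [if_pos hk]; rfl
      rw [hs, if_pos hk]
    · have hs : noiseFam W V ξ U (.inr (.inr (.inl k)))
          ⁻¹' Bsets t x (.inr (.inr (.inl k))) = Set.univ := by
        show ξ k ⁻¹' (if k ∈ t then ({(x k).2.2} : Set α) else Set.univ) = _
        rw [if_neg hk]; rfl
      rw [hs, if_neg hk, MeasureTheory.measure_univ]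
  simp only [hWp, hVp, hξp]
  rw [Finset.prod_ite_mem, Finset.prod_ite_mem, Finset.prod_ite_mem, Finset.univ_inter,
    ← Finset.prod_mul_distrib, ← Finset.prod_mul_distrib]

end Indep
section Master
set_option linter.unusedSectionVars false
variable {Ω : Type} [MeasurableSpace Ω] (P : MeasureTheory.Measure Ω)
  [MeasureTheory.IsProbabilityMeasure P]
  {K : ℕ} {α β γ : Type}
  [Fintype α] [MeasurableSpace α] [MeasurableSingletonClass α]
  [Fintype β] [MeasurableSpace β] [MeasurableSingletonClass β]
  [Fintype γ] [MeasurableSpace γ] [MeasurableSingletonClass γ]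
  {W : Fin K → Ω → γ} {V : Fin K → Ω → β} {ξ : Fin K → Ω → α} {U : Ω → ℝ}

/-- Measurability of the bundled triple. -/
lemma trip_meas (hW : ∀ k, Measurable (W k)) (hV : ∀ k, Measurable (V k)) (hξ : ∀ k, Measurable (ξ k)) (k : Fin K) : Measurable (fun ω => (W k ω, V k ω, ξ k ω)) :=
  (hW k).prodMk ((hV k).prodMk (hξ k))

/-- Decomposition of a single triple event into atoms. -/
lemma single_decomp (hW : ∀ k, Measurable (W k)) (hV : ∀ k, Measurable (V k)) (hξ : ∀ k, Measurable (ξ k)) (k : Fin K) (S₀ : Set (γ × β × α)) :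
    P {ω | (W k ω, V k ω, ξ k ω) ∈ S₀}
      = ∑ y ∈ (Set.toFinite S₀).toFinset, P {ω | (W k ω, V k ω, ξ k ω) = y} := by
  have hset : {ω | (W k ω, V k ω, ξ k ω) ∈ S₀}
      = ⋃ y ∈ (Set.toFinite S₀).toFinset, {ω | (W k ω, V k ω, ξ k ω) = y} := by
    ext ω
    simp only [Set.mem_setOf_eq, Set.mem_iUnion, Set.Finite.mem_toFinset]
    exact ⟨fun h => ⟨_, h, rfl⟩, fun ⟨y, hy, he⟩ => he ▸ hy⟩
  rw [hset]
  refine MeasureTheory.measure_biUnion_finset ?_ ?_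
  · intro y _ y' _ hyy'
    refine Set.disjoint_left.2 fun ω hω hω' => hyy' ?_
    exact hω.symm.trans hω'
  · intro y _
    exact trip_meas hW hV hξ k (measurableSet_singleton y)

/-- Master factorization: probabilities of intersections of per-`k` triple events multiply. -/
lemma master_factor (hW : ∀ k, Measurable (W k)) (hV : ∀ k, Measurable (V k)) (hξ : ∀ k, Measurable (ξ k)) (hindep : iIndepFun (m := noiseMS K α β γ) (noiseFam W V ξ U) P)
    (S : Fin K → Set (γ × β × α)) :
    P (⋂ k, {ω | (W k ω, V k ω, ξ k ω) ∈ S k})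
      = ∏ k, P {ω | (W k ω, V k ω, ξ k ω) ∈ S k} := by
  have hbig : (⋂ k, {ω | (W k ω, V k ω, ξ k ω) ∈ S k})
      = ⋃ x ∈ Fintype.piFinset (fun k => (Set.toFinite (S k)).toFinset),
          ⋂ k, {ω | (W k ω, V k ω, ξ k ω) = x k} := by
    ext ω
    simp only [Set.mem_iInter, Set.mem_setOf_eq, Set.mem_iUnion, Fintype.mem_piFinset,
      Set.Finite.mem_toFinset]
    constructor
    · intro h
      exact ⟨fun k => (W k ω, V k ω, ξ k ω), fun k => h k, fun k => rfl⟩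
    · rintro ⟨x, hx, he⟩ k
      rw [he k]; exact hx k
  rw [hbig, MeasureTheory.measure_biUnion_finset ?disj ?meas]
  case disj =>
    intro x _ x' _ hxx'
    refine Set.disjoint_left.2 fun ω hω hω' => hxx' ?_
    simp only [Set.mem_iInter, Set.mem_setOf_eq] at hω hω'
    exact funext fun k => (hω k).symm.trans (hω' k)
  case meas =>
    intro x _
    exact MeasurableSet.iInter fun k => trip_meas hW hV hξ k (measurableSet_singleton (x k))
  have hatom : ∀ x : Fin K → γ × β × α,
      P (⋂ k, {ω | (W k ω, V k ω, ξ k ω) = x k})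
        = ∏ k, (P {ω | W k ω = (x k).1}
            * (P {ω | V k ω = (x k).2.1} * P {ω | ξ k ω = (x k).2.2})) := by
    intro x
    have := atom_inter P hindep Finset.univ x
    simpa using this
  have hsingleatom : ∀ (k : Fin K) (y : γ × β × α),
      P {ω | (W k ω, V k ω, ξ k ω) = y}
        = P {ω | W k ω = y.1} * (P {ω | V k ω = y.2.1} * P {ω | ξ k ω = y.2.2}) := by
    intro k y
    have := atom_inter P hindep {k} (fun _ => y)
    simpa using this
  calc ∑ x ∈ Fintype.piFinset (fun k => (Set.toFinite (S k)).toFinset),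
        P (⋂ k, {ω | (W k ω, V k ω, ξ k ω) = x k})
      = ∑ x ∈ Fintype.piFinset (fun k => (Set.toFinite (S k)).toFinset),
          ∏ k, (P {ω | W k ω = (x k).1}
            * (P {ω | V k ω = (x k).2.1} * P {ω | ξ k ω = (x k).2.2})) := by
        exact Finset.sum_congr rfl fun x _ => hatom x
    _ = ∏ k, ∑ y ∈ (Set.toFinite (S k)).toFinset, (P {ω | W k ω = y.1}
            * (P {ω | V k ω = y.2.1} * P {ω | ξ k ω = y.2.2})) :=
        (Finset.prod_univ_sum (fun k => (Set.toFinite (S k)).toFinset)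
          (fun k y => P {ω | W k ω = y.1}
            * (P {ω | V k ω = y.2.1} * P {ω | ξ k ω = y.2.2}))).symm
    _ = ∏ k, ∑ y ∈ (Set.toFinite (S k)).toFinset, P {ω | (W k ω, V k ω, ξ k ω) = y} := by
        exact Finset.prod_congr rfl fun k _ =>
          Finset.sum_congr rfl fun y _ => (hsingleatom k y).symm
    _ = ∏ k, P {ω | (W k ω, V k ω, ξ k ω) ∈ S k} := by
        exact Finset.prod_congr rfl fun k _ => (single_decomp P hW hV hξ k (S k)).symm

end Master
section IntU
set_option linter.unusedSectionVars false
variable {Ω : Type} [MeasurableSpace Ω] (P : MeasureTheory.Measure Ω)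
  [MeasureTheory.IsProbabilityMeasure P]
  {K : ℕ} {α β γ : Type}
  [Fintype α] [MeasurableSpace α] [MeasurableSingletonClass α]
  [Fintype β] [MeasurableSpace β] [MeasurableSingletonClass β]
  [Fintype γ] [MeasurableSpace γ] [MeasurableSingletonClass γ]
  {W : Fin K → Ω → γ} {V : Fin K → Ω → β} {ξ : Fin K → Ω → α} {U : Ω → ℝ}

lemma noise_meas (hW : ∀ k, Measurable (W k)) (hV : ∀ k, Measurable (V k))
    (hξ : ∀ k, Measurable (ξ k)) (hU : Measurable U) :
    ∀ i, @Measurable Ω (NoiseCodom K α β γ i) _ (noiseMS K α β γ i) (noiseFam W V ξ U i) := by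
  rintro (k | k | k | u)
  · exact hW k
  · exact hV k
  · exact hξ k
  · exact hU

lemma setIntegral_U_eq_zero (hW : ∀ k, Measurable (W k)) (hV : ∀ k, Measurable (V k))
    (hξ : ∀ k, Measurable (ξ k)) (hU : Measurable U)
    (hindep : iIndepFun (m := noiseMS K α β γ) (noiseFam W V ξ U) P)
    (hUint : MeasureTheory.Integrable U P) (hU0 : ∫ ω, U ω ∂P = 0)
    (S : Fin K → Set (γ × β × α)) :
    ∫ ω in ⋂ k, {ω | (W k ω, V k ω, ξ k ω) ∈ S k}, U ω ∂P = 0 := by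
  classical
  letI : ∀ i, MeasurableSpace (NoiseCodom K α β γ i) := noiseMS K α β γ
  set uidx : Fin K ⊕ Fin K ⊕ Fin K ⊕ Unit := .inr (.inr (.inr ())) with huidx
  set sT : Finset (Fin K ⊕ Fin K ⊕ Fin K ⊕ Unit) := {uidx}ᶜ with hsT
  have h1 := hindep.indepFun_finset {uidx} sT disjoint_compl_right
    (noise_meas hW hV hξ hU)
  have hmemW : ∀ k : Fin K, (Sum.inl k : Fin K ⊕ Fin K ⊕ Fin K ⊕ Unit) ∈ sT := by
    intro k; simp [hsT, huidx]
  have hmemV : ∀ k : Fin K, (Sum.inr (Sum.inl k) : Fin K ⊕ Fin K ⊕ Fin K ⊕ Unit) ∈ sT := by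
    intro k; simp [hsT, huidx]
  have hmemξ : ∀ k : Fin K,
      (Sum.inr (Sum.inr (Sum.inl k)) : Fin K ⊕ Fin K ⊕ Fin K ⊕ Unit) ∈ sT := by
    intro k; simp [hsT, huidx]
  set φZ : ((i : sT) → NoiseCodom K α β γ i) → (Fin K → γ × β × α) :=
    fun y k => (y ⟨.inl k, hmemW k⟩, y ⟨.inr (.inl k), hmemV k⟩,
      y ⟨.inr (.inr (.inl k)), hmemξ k⟩) with hφZ
  have hφZmeas : Measurable φZ := by
    refine measurable_pi_lambda _ fun k => Measurable.prodMk ?_ (Measurable.prodMk ?_ ?_)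
    · exact measurable_pi_apply _
    · exact measurable_pi_apply _
    · exact measurable_pi_apply _
  set φU : ((i : ({uidx} : Finset (Fin K ⊕ Fin K ⊕ Fin K ⊕ Unit))) → NoiseCodom K α β γ i) → ℝ :=
    fun y => y ⟨uidx, Finset.mem_singleton_self _⟩ with hφU
  have hφUmeas : Measurable φU := measurable_pi_apply _
  have h2 := h1.comp hφUmeas hφZmeas
  set Z : Ω → (Fin K → γ × β × α) := fun ω k => (W k ω, V k ω, ξ k ω) with hZ
  set M : Set (Fin K → γ × β × α) := Set.univ.pi S with hM
  have hMmeas : MeasurableSet M :=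
    MeasurableSet.univ_pi fun k => (Set.toFinite (S k)).measurableSet
  have hindmeas : Measurable (M.indicator (fun _ => (1:ℝ))) :=
    Measurable.indicator (measurable_const : Measurable fun _ : (Fin K → γ × β × α) => (1:ℝ))
      hMmeas
  have h3 := h2.comp (measurable_id : Measurable (id : ℝ → ℝ)) hindmeas
  have h4 : ProbabilityTheory.IndepFun U
      (fun ω => Set.indicator M (fun _ => (1:ℝ)) (Z ω)) P := h3
  have hE : (⋂ k, {ω | (W k ω, V k ω, ξ k ω) ∈ S k}) = Z ⁻¹' M := by
    ext ω; simp [hZ, hM, Set.mem_iInter, Set.mem_pi]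
  have hEmeas : MeasurableSet (⋂ k, {ω | (W k ω, V k ω, ξ k ω) ∈ S k}) :=
    MeasurableSet.iInter fun k =>
      trip_meas hW hV hξ k ((Set.toFinite (S k)).measurableSet)
  have hind : ∀ ω, (⋂ k, {ω | (W k ω, V k ω, ξ k ω) ∈ S k}).indicator U ω
      = U ω * Set.indicator M (fun _ => (1:ℝ)) (Z ω) := by
    intro ω
    by_cases h : ω ∈ ⋂ k, {ω | (W k ω, V k ω, ξ k ω) ∈ S k}
    · have hzm : Z ω ∈ M := Set.mem_preimage.mp (hE ▸ h)
      rw [Set.indicator_of_mem h, Set.indicator_of_mem hzm, mul_one]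
    · have hzm : Z ω ∉ M := fun hm => h (hE.symm ▸ (Set.mem_preimage.mpr hm))
      rw [Set.indicator_of_notMem h, Set.indicator_of_notMem hzm, mul_zero]
  have hZmeas : Measurable Z := measurable_pi_lambda _ fun k => trip_meas hW hV hξ k
  have hintind : MeasureTheory.Integrable
      (fun ω => Set.indicator M (fun _ => (1:ℝ)) (Z ω)) P := by
    refine MeasureTheory.Integrable.mono' (MeasureTheory.integrable_const 1)
      (hindmeas.comp hZmeas).aestronglyMeasurable
      (Filter.Eventually.of_forall fun ω => ?_)
    by_cases h : Z ω ∈ M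
    · rw [Set.indicator_of_mem h]; simp
    · rw [Set.indicator_of_notMem h]; simp
  rw [← MeasureTheory.integral_indicator hEmeas]
  calc ∫ ω, (⋂ k, {ω | (W k ω, V k ω, ξ k ω) ∈ S k}).indicator U ω ∂P
      = ∫ ω, U ω * Set.indicator M (fun _ => (1:ℝ)) (Z ω) ∂P :=
        MeasureTheory.integral_congr_ae (Filter.Eventually.of_forall hind)
    _ = (∫ ω, U ω ∂P) * ∫ ω, Set.indicator M (fun _ => (1:ℝ)) (Z ω) ∂P :=
        ProbabilityTheory.IndepFun.integral_fun_mul_eq_mul_integral h4 hUint.aestronglyMeasurable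
          hintind.aestronglyMeasurable
    _ = 0 := by rw [hU0, zero_mul]

end IntU
section CondInt
set_option linter.unusedSectionVars false
variable {Ω : Type} [MeasurableSpace Ω] (P : MeasureTheory.Measure Ω)
  [MeasureTheory.IsProbabilityMeasure P]
  {K : ℕ} {α β γ : Type}
  [Fintype α] [MeasurableSpace α] [MeasurableSingletonClass α]
  [Fintype β] [MeasurableSpace β] [MeasurableSingletonClass β]
  [Fintype γ] [MeasurableSpace γ] [MeasurableSingletonClass γ]
  {W : Fin K → Ω → γ} {V : Fin K → Ω → β} {ξ : Fin K → Ω → α} {U : Ω → ℝ}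

lemma cond_integral (hW : ∀ k, Measurable (W k)) (hV : ∀ k, Measurable (V k))
    (hξ : ∀ k, Measurable (ξ k)) (hU : Measurable U)
    (hindep : iIndepFun (m := noiseMS K α β γ) (noiseFam W V ξ U) P)
    (hUint : MeasureTheory.Integrable U P) (hU0 : ∫ ω, U ω ∂P = 0)
    (S : Fin K → Set (γ × β × α)) (φ : Fin K → γ → ℝ)
    (hpos : 0 < P (⋂ k, {ω | (W k ω, V k ω, ξ k ω) ∈ S k})) :
    ∫ ω, ((∑ k, φ k (W k ω)) + U ω) ∂(P[|⋂ k, {ω | (W k ω, V k ω, ξ k ω) ∈ S k}])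
      = ∑ k, (∑ c : γ, φ k c
            * (P ({ω | (W k ω, V k ω, ξ k ω) ∈ S k} ∩ {ω | W k ω = c})).toReal)
          / (P {ω | (W k ω, V k ω, ξ k ω) ∈ S k}).toReal := by
  classical
  set Ev : Fin K → Set Ω := fun k => {ω | (W k ω, V k ω, ξ k ω) ∈ S k} with hEv
  set E : Set Ω := ⋂ k, Ev k with hE
  have hEvmeas : ∀ k, MeasurableSet (Ev k) := fun k =>
    trip_meas hW hV hξ k ((Set.toFinite (S k)).measurableSet)
  have hEmeas : MeasurableSet E := MeasurableSet.iInter hEvmeas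
  have hWc : ∀ (k : Fin K) (c : γ), MeasurableSet {ω | W k ω = c} := fun k c =>
    hW k (measurableSet_singleton c)
  -- probabilities
  have hmaster := master_factor P hW hV hξ hindep S
  have hne : ∀ k, P (Ev k) ≠ 0 := by
    intro k
    have h0 : P E ≠ 0 := hpos.ne'
    rw [hE, hmaster] at h0
    exact fun h => h0 (Finset.prod_eq_zero (Finset.mem_univ k) h)
  have hnetop : ∀ k, P (Ev k) ≠ ⊤ := fun k => MeasureTheory.measure_ne_top P _
  have hppos : ∀ k, 0 < (P (Ev k)).toReal := fun k =>
    ENNReal.toReal_pos (hne k) (hnetop k)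
  have hinter : ∀ (k0 : Fin K) (c : γ),
      P (E ∩ {ω | W k0 ω = c})
        = P (Ev k0 ∩ {ω | W k0 ω = c}) * ∏ i ∈ Finset.univ.erase k0, P (Ev i) := by
    intro k0 c
    set S' : Fin K → Set (γ × β × α) :=
      fun k => if k = k0 then S k0 ∩ {y | y.1 = c} else S k with hS'
    have hset : E ∩ {ω | W k0 ω = c} = ⋂ k, {ω | (W k ω, V k ω, ξ k ω) ∈ S' k} := by
      ext ω
      simp only [hE, hEv, Set.mem_inter_iff, Set.mem_iInter, Set.mem_setOf_eq, hS']
      constructor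
      · rintro ⟨h1, h2⟩ k
        by_cases hk : k = k0
        · subst hk; rw [if_pos rfl]; exact ⟨h1 k, h2⟩
        · rw [if_neg hk]; exact h1 k
      · intro h
        constructor
        · intro k
          by_cases hk : k = k0
          · subst hk; have := h k; rw [if_pos rfl] at this; exact this.1
          · have := h k; rwa [if_neg hk] at this
        · have := h k0; rw [if_pos rfl] at this; exact this.2
    have hfirst : {ω | (W k0 ω, V k0 ω, ξ k0 ω) ∈ S' k0} = Ev k0 ∩ {ω | W k0 ω = c} := by
      ext ω
      simp only [hS', if_pos rfl, hEv, Set.mem_setOf_eq, Set.mem_inter_iff, Set.mem_inter_iff]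
    have hrest : ∀ i ∈ Finset.univ.erase k0,
        P {ω | (W i ω, V i ω, ξ i ω) ∈ S' i} = P (Ev i) := by
      intro i hi
      have hik : i ≠ k0 := (Finset.mem_erase.mp hi).1
      rw [hS']; simp only [if_neg hik]; rfl
    rw [hset, master_factor P hW hV hξ hindep S',
      ← Finset.mul_prod_erase Finset.univ _ (Finset.mem_univ k0), hfirst]
    congr 1
    exact Finset.prod_congr rfl hrest
  -- integrability
  have hrep : ∀ k, (fun ω => φ k (W k ω))
      = fun ω => ∑ c : γ, ({ω' | W k ω' = c}.indicator (fun _ => φ k c)) ω := by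
    intro k
    funext ω
    rw [Finset.sum_eq_single (W k ω)]
    · rw [Set.indicator_of_mem (by exact rfl)]
    · intro c _ hc
      exact Set.indicator_of_notMem
        (fun hmem => hc ((show W k ω = c from hmem).symm)) _
    · intro h; exact absurd (Finset.mem_univ _) h
  have hφint : ∀ k, MeasureTheory.Integrable (fun ω => φ k (W k ω)) P := by
    intro k
    rw [hrep k]
    exact MeasureTheory.integrable_finset_sum _ fun c _ =>
      (MeasureTheory.integrable_const (φ k c)).indicator (hWc k c)
  -- compute the conditional integral
  rw [ProbabilityTheory.cond, MeasureTheory.integral_smul_measure]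
  have hsplit : ∫ ω in E, ((∑ k, φ k (W k ω)) + U ω) ∂P
      = (∑ k, ∫ ω in E, φ k (W k ω) ∂P) + ∫ ω in E, U ω ∂P := by
    rw [MeasureTheory.integral_add]
    · congr 1
      exact MeasureTheory.integral_finset_sum _ fun k _ => (hφint k).restrict
    · exact (MeasureTheory.integrable_finset_sum _ fun k _ => (hφint k)).restrict
    · exact hUint.restrict
  have hUzero : ∫ ω in E, U ω ∂P = 0 := by
    rw [hE, hEv]
    exact setIntegral_U_eq_zero P hW hV hξ hU hindep hUint hU0 S
  have hterm : ∀ k, ∫ ω in E, φ k (W k ω) ∂P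
      = ∑ c : γ, φ k c * (P (E ∩ {ω | W k ω = c})).toReal := by
    intro k
    rw [hrep k]
    rw [MeasureTheory.integral_finset_sum _ fun c _ =>
      ((MeasureTheory.integrable_const (φ k c)).indicator (hWc k c)).restrict]
    refine Finset.sum_congr rfl fun c _ => ?_
    rw [MeasureTheory.setIntegral_indicator (hWc k c), MeasureTheory.setIntegral_const,
      smul_eq_mul, mul_comm]
    rfl
  rw [hsplit, hUzero, add_zero]
  rw [smul_eq_mul]
  rw [Finset.mul_sum]
  refine Finset.sum_congr rfl fun k _ => ?_
  rw [hterm k]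
  have hsum : (∑ c : γ, φ k c * (P (E ∩ {ω | W k ω = c})).toReal)
      = (∑ c : γ, φ k c * (P (Ev k ∩ {ω | W k ω = c})).toReal)
          * ∏ i ∈ Finset.univ.erase k, (P (Ev i)).toReal := by
    rw [Finset.sum_mul]
    refine Finset.sum_congr rfl fun c _ => ?_
    rw [hinter k c, ENNReal.toReal_mul, ENNReal.toReal_prod, mul_assoc]
  rw [hsum]
  have hPE : (P E).toReal = (P (Ev k)).toReal * ∏ i ∈ Finset.univ.erase k, (P (Ev i)).toReal := by
    rw [hE, hmaster, ← Finset.mul_prod_erase Finset.univ _ (Finset.mem_univ k),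
      ENNReal.toReal_mul, ENNReal.toReal_prod]
  rw [ENNReal.toReal_inv, hPE]
  have hprodpos : 0 < ∏ i ∈ Finset.univ.erase k, (P (Ev i)).toReal :=
    Finset.prod_pos fun i _ => hppos i
  field_simp
  rfl
end CondInt
/-- Per-coordinate sets for the `(ξ_k, W_k)` pair event. -/
def Bpair {K : ℕ} {α β γ : Type} (k : Fin K) (c : γ) (x : α) :
    (i : Fin K ⊕ Fin K ⊕ Fin K ⊕ Unit) → Set (NoiseCodom K α β γ i)
  | .inl k' => if k' = k then ({c} : Set γ) else Set.univ
  | .inr (.inl _) => Set.univ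
  | .inr (.inr (.inl k')) => if k' = k then ({x} : Set α) else Set.univ
  | .inr (.inr (.inr _)) => (Set.univ : Set ℝ)

section Pair
set_option linter.unusedSectionVars false
variable {Ω : Type} [MeasurableSpace Ω] (P : MeasureTheory.Measure Ω)
  [MeasureTheory.IsProbabilityMeasure P]
  {K : ℕ} {α β γ : Type}
  [Fintype α] [MeasurableSpace α] [MeasurableSingletonClass α]
  [Fintype β] [MeasurableSpace β] [MeasurableSingletonClass β]
  [Fintype γ] [MeasurableSpace γ] [MeasurableSingletonClass γ]
  {W : Fin K → Ω → γ} {V : Fin K → Ω → β} {ξ : Fin K → Ω → α} {U : Ω → ℝ}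

lemma Bpair_meas (k : Fin K) (c : γ) (x : α) :
    ∀ i, MeasurableSet[noiseMS K α β γ i] (Bpair k c x i) := by
  rintro (k' | k' | k' | u)
  · exact @Set.Finite.measurableSet γ _ _ _ (Set.toFinite _)
  · exact @MeasurableSet.univ β _
  · exact @Set.Finite.measurableSet α _ _ _ (Set.toFinite _)
  · exact @MeasurableSet.univ ℝ _

lemma pair_factor (hindep : iIndepFun (m := noiseMS K α β γ) (noiseFam W V ξ U) P)
    (k : Fin K) (c : γ) (x : α) :
    P ({ω | ξ k ω = x} ∩ {ω | W k ω = c})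
      = P {ω | ξ k ω = x} * P {ω | W k ω = c} := by
  classical
  have hset : (⋂ i ∈ (Finset.univ : Finset (Fin K ⊕ Fin K ⊕ Fin K ⊕ Unit)),
      noiseFam W V ξ U i ⁻¹' Bpair k c x i)
      = {ω | ξ k ω = x} ∩ {ω | W k ω = c} := by
    ext ω
    simp only [Set.mem_iInter, Finset.mem_univ, forall_true_left, Set.mem_inter_iff,
      Set.mem_setOf_eq, Set.mem_preimage]
    constructor
    · intro hI
      have h1 : W k ω ∈ (if k = k then ({c} : Set γ) else Set.univ) := hI (.inl k)
      have h3 : ξ k ω ∈ (if k = k then ({x} : Set α) else Set.univ) :=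
        hI (.inr (.inr (.inl k)))
      rw [if_pos rfl] at h1 h3
      exact ⟨h3, h1⟩
    · rintro ⟨hξx, hWc⟩ (k' | k' | k' | u)
      · show W k' ω ∈ (if k' = k then ({c} : Set γ) else Set.univ)
        split
        · next hk => subst hk; exact hWc
        · exact Set.mem_univ _
      · exact Set.mem_univ _
      · show ξ k' ω ∈ (if k' = k then ({x} : Set α) else Set.univ)
        split
        · next hk => subst hk; exact hξx
        · exact Set.mem_univ _
      · exact Set.mem_univ _
  rw [← hset, noise_biInter P hindep _ (Bpair_meas k c x)]
  rw [Fintype.prod_sum_type, Fintype.prod_sum_type, Fintype.prod_sum_type]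
  have hU1 : (∏ u : Unit,
      P (noiseFam W V ξ U (.inr (.inr (.inr u))) ⁻¹' Bpair k c x (.inr (.inr (.inr u))))) = 1 := by
    have : ∀ u : Unit,
        noiseFam W V ξ U (.inr (.inr (.inr u))) ⁻¹' Bpair k c x (.inr (.inr (.inr u)))
          = Set.univ := fun u => Set.preimage_univ
    simp [this]
  have hV1 : (∏ k' : Fin K,
      P (noiseFam W V ξ U (.inr (.inl k')) ⁻¹' Bpair k c x (.inr (.inl k')))) = 1 := by
    have : ∀ k' : Fin K,
        noiseFam W V ξ U (.inr (.inl k')) ⁻¹' Bpair k c x (.inr (.inl k'))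
          = Set.univ := fun k' => Set.preimage_univ
    simp [this]
  rw [hU1, hV1, mul_one, one_mul]
  have hWp : ∀ k', P (noiseFam W V ξ U (.inl k') ⁻¹' Bpair k c x (.inl k'))
      = (if k' = k then P {ω | W k ω = c} else 1) := by
    intro k'
    by_cases hk : k' = k
    · subst hk
      have hs : noiseFam W V ξ U (.inl k') ⁻¹' Bpair k' c x (.inl k') = {ω | W k' ω = c} := by
        show W k' ⁻¹' (if k' = k' then ({c} : Set γ) else Set.univ) = _
        rw [if_pos rfl]; rfl
      rw [hs, if_pos rfl]
    · have hs : noiseFam W V ξ U (.inl k') ⁻¹' Bpair k c x (.inl k') = Set.univ := by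
        show W k' ⁻¹' (if k' = k then ({c} : Set γ) else Set.univ) = _
        rw [if_neg hk]; rfl
      rw [hs, if_neg hk, MeasureTheory.measure_univ]
  have hξp : ∀ k', P (noiseFam W V ξ U (.inr (.inr (.inl k')))
        ⁻¹' Bpair k c x (.inr (.inr (.inl k'))))
      = (if k' = k then P {ω | ξ k ω = x} else 1) := by
    intro k'
    by_cases hk : k' = k
    · subst hk
      have hs : noiseFam W V ξ U (.inr (.inr (.inl k')))
          ⁻¹' Bpair k' c x (.inr (.inr (.inl k'))) = {ω | ξ k' ω = x} := by
        show ξ k' ⁻¹' (if k' = k' then ({x} : Set α) else Set.univ) = _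
        rw [if_pos rfl]; rfl
      rw [hs, if_pos rfl]
    · have hs : noiseFam W V ξ U (.inr (.inr (.inl k')))
          ⁻¹' Bpair k c x (.inr (.inr (.inl k'))) = Set.univ := by
        show ξ k' ⁻¹' (if k' = k then ({x} : Set α) else Set.univ) = _
        rw [if_neg hk]; rfl
      rw [hs, if_neg hk, MeasureTheory.measure_univ]
  simp only [hWp, hξp]
  rw [Finset.prod_ite_eq' Finset.univ k (fun _ => P {ω | W k ω = c}),
    Finset.prod_ite_eq' Finset.univ k (fun _ => P {ω | ξ k ω = x})]
  simp [mul_comm]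

end Pair
/-- **Theorem 1 (discrete, constructive form).** Under the support condition, any
estimator family fitted to the observational and single-intervention conditional
expectations identifies the joint interventional effect. -/
theorem joint_effect_identifiable
    {Ω : Type} [MeasurableSpace Ω] (P : MeasureTheory.Measure Ω) [MeasureTheory.IsProbabilityMeasure P]
    {K : ℕ} (hK : 1 ≤ K)
    {α β γ : Type} [Fintype α] [Nonempty α] [MeasurableSpace α] [MeasurableSingletonClass α]
    [Fintype β] [Nonempty β] [MeasurableSpace β] [MeasurableSingletonClass β]
    [Fintype γ] [Nonempty γ] [MeasurableSpace γ] [MeasurableSingletonClass γ]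
    (W : Fin K → Ω → γ) (V : Fin K → Ω → β) (ξ : Fin K → Ω → α) (U : Ω → ℝ)
    (hW : ∀ k, Measurable (W k)) (hV : ∀ k, Measurable (V k))
    (hξ : ∀ k, Measurable (ξ k)) (hU : Measurable U)
    (hindep : iIndepFun (m := noiseMS K α β γ) (noiseFam W V ξ U) P)
    (hUint : MeasureTheory.Integrable U P) (hU0 : ∫ ω, U ω ∂P = 0)
    (g : (k : Fin K) → ((i : Fin K) → i < k → α) → γ → β → α)
    (f : Fin K → α → γ → ℝ)
    (hsupJ : ∀ a : Fin K → α,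
      0 < P (eventEq (Aobs g W V) a) ↔ 0 < P (eventEq ξ a))
    (hsupS : ∀ (j : Fin K) (a : Fin K → α),
      0 < P (eventEq (Aobs g W V) a) ↔ 0 < P (eventEq (Asingle g W V ξ j) a))
    (fhat : Fin K → (Fin K → α) → Bool → ℝ)
    (hfitObs : ∀ a : Fin K → α, 0 < P (eventEq (Aobs g W V) a) →
      ∑ k, fhat k a false
        = ∫ ω, outcome f (Aobs g W V) W U ω ∂(P[|eventEq (Aobs g W V) a]))
    (hfitSint : ∀ (j : Fin K) (a : Fin K → α),
      0 < P (eventEq (Asingle g W V ξ j) a) →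
      fhat j a true + ∑ k ∈ Finset.univ.erase j, fhat k a false
        = ∫ ω, outcome f (Asingle g W V ξ j) W U ω
            ∂(P[|eventEq (Asingle g W V ξ j) a])) :
    ∀ a : Fin K → α, 0 < P (eventEq ξ a) →
      ∑ k, fhat k a true = ∫ ω, outcome f ξ W U ω ∂(P[|eventEq ξ a]) := by
  intro a ha
  classical
  set SO : Fin K → Set (γ × β × α) :=
    fun k => {y | g k (fun i _ => a i) y.1 y.2.1 = a k} with hSOdef
  set SJ : Fin K → Set (γ × β × α) := fun k => {y | y.2.2 = a k} with hSJdef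
  -- event identifications
  have hEO : eventEq (Aobs g W V) a = ⋂ k, {ω | (W k ω, V k ω, ξ k ω) ∈ SO k} := by
    rw [eventEq_obs]; rfl
  have hEJ : eventEq ξ a = ⋂ k, {ω | (W k ω, V k ω, ξ k ω) ∈ SJ k} := rfl
  have hES : ∀ j, eventEq (Asingle g W V ξ j) a
      = ⋂ k, {ω | (W k ω, V k ω, ξ k ω) ∈ (if k = j then SJ k else SO k)} := by
    intro j
    rw [eventEq_single]
    refine Set.iInter_congr fun k => ?_
    by_cases hk : k = j
    · subst hk; rw [if_pos rfl, if_pos rfl]; rfl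
    · rw [if_neg hk, if_neg hk]; rfl
  -- positivity
  have hposO : 0 < P (eventEq (Aobs g W V) a) := (hsupJ a).mpr ha
  have hposS : ∀ j, 0 < P (eventEq (Asingle g W V ξ j) a) := fun j => (hsupS j a).mp hposO
  have hposO' : 0 < P (⋂ k, {ω | (W k ω, V k ω, ξ k ω) ∈ SO k}) := hEO ▸ hposO
  have hposJ' : 0 < P (⋂ k, {ω | (W k ω, V k ω, ξ k ω) ∈ SJ k}) := hEJ ▸ ha
  have hposS' : ∀ j, 0 < P (⋂ k,
      {ω | (W k ω, V k ω, ξ k ω) ∈ (if k = j then SJ k else SO k)}) :=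
    fun j => hES j ▸ hposS j
  -- outcome congruence on the conditioning events
  have hcong : ∀ (A : Fin K → Ω → α), MeasurableSet (eventEq A a) →
      ∫ ω, outcome f A W U ω ∂(P[|eventEq A a])
        = ∫ ω, ((∑ k, f k (a k) (W k ω)) + U ω) ∂(P[|eventEq A a]) := by
    intro A hmeas
    rw [ProbabilityTheory.cond, MeasureTheory.integral_smul_measure,
      MeasureTheory.integral_smul_measure]
    congr 1
    refine MeasureTheory.setIntegral_congr_fun hmeas fun ω hω => ?_
    have hA : ∀ k, A k ω = a k := fun k => Set.mem_iInter.mp hω k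
    show (∑ k, f k (A k ω) (W k ω)) + U ω = (∑ k, f k (a k) (W k ω)) + U ω
    congr 1
    exact Finset.sum_congr rfl fun k _ => by rw [hA k]
  have hmeasO : MeasurableSet (eventEq (Aobs g W V) a) := by
    rw [hEO]
    exact MeasurableSet.iInter fun k =>
      trip_meas hW hV hξ k ((Set.toFinite (SO k)).measurableSet)
  have hmeasJ : MeasurableSet (eventEq ξ a) := by
    rw [hEJ]
    exact MeasurableSet.iInter fun k =>
      trip_meas hW hV hξ k ((Set.toFinite (SJ k)).measurableSet)
  have hmeasS : ∀ j, MeasurableSet (eventEq (Asingle g W V ξ j) a) := by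
    intro j
    rw [hES j]
    exact MeasurableSet.iInter fun k =>
      trip_meas hW hV hξ k ((Set.toFinite _).measurableSet)
  -- conditional expectations via cond_integral
  set mO : Fin K → ℝ := fun k =>
    (∑ c : γ, f k (a k) c
        * (P ({ω | (W k ω, V k ω, ξ k ω) ∈ SO k} ∩ {ω | W k ω = c})).toReal)
      / (P {ω | (W k ω, V k ω, ξ k ω) ∈ SO k}).toReal with hmO
  set μv : Fin K → ℝ := fun k =>
    ∑ c : γ, f k (a k) c * (P {ω | W k ω = c}).toReal with hμv
  -- the ξ-events, and simplification of joint-type terms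
  have hJset : ∀ k, {ω | (W k ω, V k ω, ξ k ω) ∈ SJ k} = {ω | ξ k ω = a k} := fun k => rfl
  have hξne : ∀ k, P {ω | ξ k ω = a k} ≠ 0 := by
    intro k
    have h0 : P (⋂ k, {ω | (W k ω, V k ω, ξ k ω) ∈ SJ k}) ≠ 0 := hposJ'.ne'
    rw [master_factor P hW hV hξ hindep SJ] at h0
    intro h
    exact h0 (Finset.prod_eq_zero (Finset.mem_univ k) ((hJset k) ▸ h))
  have hsimpJ : ∀ k,
      (∑ c : γ, f k (a k) c
          * (P ({ω | (W k ω, V k ω, ξ k ω) ∈ SJ k} ∩ {ω | W k ω = c})).toReal)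
        / (P {ω | (W k ω, V k ω, ξ k ω) ∈ SJ k}).toReal = μv k := by
    intro k
    rw [hJset k]
    have hfac : ∀ c : γ, (P ({ω | ξ k ω = a k} ∩ {ω | W k ω = c})).toReal
        = (P {ω | ξ k ω = a k}).toReal * (P {ω | W k ω = c}).toReal := by
      intro c
      rw [pair_factor P hindep k c (a k), ENNReal.toReal_mul]
    have hnum : (∑ c : γ, f k (a k) c
        * (P ({ω | ξ k ω = a k} ∩ {ω | W k ω = c})).toReal)
        = (P {ω | ξ k ω = a k}).toReal * μv k := by
      rw [hμv, Finset.mul_sum]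
      exact Finset.sum_congr rfl fun c _ => by rw [hfac c]; ring
    rw [hnum, mul_comm, mul_div_assoc, div_self
      (ENNReal.toReal_ne_zero.mpr ⟨hξne k, MeasureTheory.measure_ne_top P _⟩), mul_one]
  -- observational equation
  have hObs : ∑ k, fhat k a false = ∑ k, mO k := by
    rw [hfitObs a hposO, hcong (Aobs g W V) hmeasO, hEO,
      cond_integral P hW hV hξ hU hindep hUint hU0 SO (fun k => f k (a k)) hposO']
  -- joint interventional expectation
  have hJoint : ∫ ω, outcome f ξ W U ω ∂(P[|eventEq ξ a]) = ∑ k, μv k := by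
    rw [hcong ξ hmeasJ, hEJ,
      cond_integral P hW hV hξ hU hindep hUint hU0 SJ (fun k => f k (a k)) hposJ']
    exact Finset.sum_congr rfl fun k _ => hsimpJ k
  -- single-intervention equations
  have hSint : ∀ j, fhat j a true + ∑ k ∈ Finset.univ.erase j, fhat k a false
      = μv j + ∑ k ∈ Finset.univ.erase j, mO k := by
    intro j
    rw [hfitSint j a (hposS j), hcong (Asingle g W V ξ j) (hmeasS j), hES j,
      cond_integral P hW hV hξ hU hindep hUint hU0 _ (fun k => f k (a k)) (hposS' j)]
    have hterm : ∀ k : Fin K,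
        (∑ c : γ, f k (a k) c
            * (P ({ω | (W k ω, V k ω, ξ k ω) ∈ (if k = j then SJ k else SO k)}
                ∩ {ω | W k ω = c})).toReal)
          / (P {ω | (W k ω, V k ω, ξ k ω) ∈ (if k = j then SJ k else SO k)}).toReal
        = if k = j then μv k else mO k := by
      intro k
      by_cases hk : k = j
      · simp only [if_pos hk]
        exact hsimpJ k
      · simp only [if_neg hk]; rfl
    rw [Finset.sum_congr rfl fun k _ => hterm k]
    rw [← Finset.add_sum_erase Finset.univ _ (Finset.mem_univ j), if_pos rfl]
    congr 1
    refine Finset.sum_congr rfl fun k hk => ?_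
    rw [if_neg (Finset.mem_erase.mp hk).1]
  -- algebra
  have hkey : ∀ j, fhat j a true = μv j - mO j + fhat j a false := by
    intro j
    have h1 : ∑ k ∈ Finset.univ.erase j, fhat k a false
        = (∑ k, fhat k a false) - fhat j a false :=
      Finset.sum_erase_eq_sub (Finset.mem_univ j)
    have h2 : ∑ k ∈ Finset.univ.erase j, mO k = (∑ k, mO k) - mO j :=
      Finset.sum_erase_eq_sub (Finset.mem_univ j)
    have := hSint j
    rw [h1, h2, hObs] at this
    linarith
  rw [hJoint]
  calc ∑ k, fhat k a true = ∑ k, (μv k - mO k + fhat k a false) :=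
        Finset.sum_congr rfl fun k _ => hkey k
    _ = (∑ k, μv k) - (∑ k, mO k) + ∑ k, fhat k a false := by
        rw [Finset.sum_add_distrib, Finset.sum_sub_distrib]
    _ = ∑ k, μv k := by rw [hObs]; ring
end

section
/- Assume the support condition: for every action profile a : Fin K → α, P({A = a}) > 0 ↔ P({Ã^j = a}) > 0 for every index j, and for every subset S ⊆ Fin K, P({A = a}) > 0 ↔ P({Â^S = a}) > 0, where the mixed-intervention model for S is Â^S_k := ξ_k if k ∈ S and Â^S_k := g_k((Â^S_i)_{i<k}, C_k, V_k) if k ∉ S, with outcome Ŷ^S := Σ_k f_k(Â^S_k, C_k) + U. Suppose an estimator family f̂ : Fin K → (Fin K → α) → Bool → ℝ satisfies the fitting equations: for every a with P({A = a}) > 0, Σ_k f̂_k a false = E[Y | {A = a}]; and for every j and every a with P({Ã^j = a}) > 0, f̂_j a true + Σ_{k ≠ j} f̂_k a false = E[Ỹ^j | {Ã^j = a}]. Then for every S ⊆ Fin K and every a with P({Â^S = a}) > 0: Σ_{k ∈ S} f̂_k a true + Σ_{k ∉ S} f̂_k a false = E[Ŷ^S | {Â^S = a}]. -/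
open MeasureTheory ProbabilityTheory
open scoped ENNReal

lemma finStrongInd {K : ℕ} {C : Fin K → Prop} (h : ∀ k, (∀ i, i < k → C i) → C k) (k : Fin K) :
    C k :=
  h k (fun i _ => finStrongInd h i)
termination_by k.1
decreasing_by exact ‹_ < k›

lemma Aobs_eq_Amix {Ω α β γ : Type} {K : ℕ}
    (g : (k : Fin K) → ((i : Fin K) → i < k → α) → γ → β → α)
    (W : Fin K → Ω → γ) (V : Fin K → Ω → β) (ξ : Fin K → Ω → α) (k : Fin K) (ω : Ω) :
    Aobs g W V k ω = Amix g W V ξ ∅ k ω := by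
  induction k using finStrongInd with
  | h k ih =>
    rw [Aobs, Amix]
    simp only [Finset.notMem_empty, if_false]
    congr 1
    funext i hi
    exact ih i hi

lemma Asingle_eq_Amix {Ω α β γ : Type} {K : ℕ}
    (g : (k : Fin K) → ((i : Fin K) → i < k → α) → γ → β → α)
    (W : Fin K → Ω → γ) (V : Fin K → Ω → β) (ξ : Fin K → Ω → α) (j : Fin K) (k : Fin K) (ω : Ω) :
    Asingle g W V ξ j k ω = Amix g W V ξ {j} k ω := by
  induction k using finStrongInd with
  | h k ih =>
    rw [Asingle, Amix]
    simp only [Finset.mem_singleton]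
    by_cases hk : k = j
    · subst hk; simp
    · simp only [hk, if_false]
      congr 1
      funext i hi
      exact ih i hi

/-- The per-coordinate predicate describing the mixed-intervention event. -/
def Qpred {α β γ : Type} {K : ℕ}
    (g : (k : Fin K) → ((i : Fin K) → i < k → α) → γ → β → α)
    (S : Finset (Fin K)) (a : Fin K → α) (k : Fin K) (z : γ × β × α) : Prop :=
  if k ∈ S then z.2.2 = a k else g k (fun i _ => a i) z.1 z.2.1 = a k

/-- The event determined by a per-coordinate predicate on the block noises. -/
def Fev {Ω α β γ : Type} {K : ℕ} (W : Fin K → Ω → γ) (V : Fin K → Ω → β)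
    (ξ : Fin K → Ω → α) (Q : Fin K → γ × β × α → Prop) (k : Fin K) : Set Ω :=
  {ω | Q k (W k ω, V k ω, ξ k ω)}

lemma eventEq_amix {Ω α β γ : Type} {K : ℕ}
    (g : (k : Fin K) → ((i : Fin K) → i < k → α) → γ → β → α)
    (W : Fin K → Ω → γ) (V : Fin K → Ω → β) (ξ : Fin K → Ω → α)
    (S : Finset (Fin K)) (a : Fin K → α) :
    eventEq (Amix g W V ξ S) a = ⋂ k, Fev W V ξ (Qpred g S a) k := by
  ext ω
  simp only [eventEq, Set.mem_iInter, Set.mem_setOf_eq, Fev, Qpred]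
  constructor
  · intro h k
    have hk := h k
    rw [Amix] at hk
    by_cases hm : k ∈ S
    · simpa [hm] using hk
    · simp only [hm, if_false] at hk ⊢
      have hpre : (fun (i : Fin K) (_ : i < k) => Amix g W V ξ S i ω) = fun i _ => a i := by
        funext i hi; exact h i
      rw [← hpre]; exact hk
  · intro h k
    induction k using finStrongInd with
    | h k ih =>
      rw [Amix]
      have hk := h k
      by_cases hm : k ∈ S
      · simpa [hm] using by simpa [hm] using hk
      · simp only [hm, if_false] at hk ⊢
        have hpre : (fun (i : Fin K) (_ : i < k) => Amix g W V ξ S i ω) = fun i _ => a i := by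
          funext i hi; exact ih i hi
        rw [hpre]; exact hk

section IndepCore

variable {Ω : Type} [MeasurableSpace Ω] {K : ℕ} {α β γ : Type}
  [Fintype α] [MeasurableSpace α] [MeasurableSingletonClass α]
  [Fintype β] [MeasurableSpace β] [MeasurableSingletonClass β]
  [Fintype γ] [MeasurableSpace γ] [MeasurableSingletonClass γ]

/-- Index of `W k` in the noise family. -/
abbrev iW (K : ℕ) (k : Fin K) : Fin K ⊕ Fin K ⊕ Fin K ⊕ Unit := Sum.inl k
/-- Index of `V k` in the noise family. -/
abbrev iV (K : ℕ) (k : Fin K) : Fin K ⊕ Fin K ⊕ Fin K ⊕ Unit := Sum.inr (Sum.inl k)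
/-- Index of `ξ k` in the noise family. -/
abbrev iX (K : ℕ) (k : Fin K) : Fin K ⊕ Fin K ⊕ Fin K ⊕ Unit := Sum.inr (Sum.inr (Sum.inl k))
/-- Index of `U` in the noise family. -/
abbrev iU (K : ℕ) : Fin K ⊕ Fin K ⊕ Fin K ⊕ Unit := Sum.inr (Sum.inr (Sum.inr ()))

/-- Block of indices corresponding to the noises of step `k`. -/
def blk (K : ℕ) (k : Fin K) : Finset (Fin K ⊕ Fin K ⊕ Fin K ⊕ Unit) :=
  {iW K k, iV K k, iX K k}

lemma measurable_noisePi {T' : Finset (Fin K ⊕ Fin K ⊕ Fin K ⊕ Unit)}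
    (hT' : iU K ∉ T') {δ : Type} [MeasurableSpace δ]
    (φ : ((i : T') → NoiseCodom K α β γ i) → δ) :
    @Measurable _ _ (@MeasurableSpace.pi _ _ (fun i : T' => noiseMS K α β γ i)) _ φ := by
  letI : ∀ i : T', MeasurableSpace (NoiseCodom K α β γ i) := fun i => noiseMS K α β γ i
  haveI hC : ∀ i : T', Countable (NoiseCodom K α β γ i.1) := by
    rintro ⟨(k | k | k | u), hi⟩
    · exact inferInstanceAs (Countable γ)
    · exact inferInstanceAs (Countable β)
    · exact inferInstanceAs (Countable α)
    · cases u; exact absurd hi hT'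
  haveI hM : ∀ i : T', MeasurableSingletonClass (NoiseCodom K α β γ i.1) := by
    rintro ⟨(k | k | k | u), hi⟩
    · exact inferInstanceAs (MeasurableSingletonClass γ)
    · exact inferInstanceAs (MeasurableSingletonClass β)
    · exact inferInstanceAs (MeasurableSingletonClass α)
    · cases u; exact absurd hi hT'
  exact measurable_of_countable φ

lemma iU_not_mem_biUnion (t : Finset (Fin K)) : iU K ∉ t.biUnion (blk K) := by
  simp [Finset.mem_biUnion, blk]

lemma measurable_noiseFam (W : Fin K → Ω → γ) (V : Fin K → Ω → β) (ξ : Fin K → Ω → α)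
    (U : Ω → ℝ) (hW : ∀ k, Measurable (W k)) (hV : ∀ k, Measurable (V k))
    (hξ : ∀ k, Measurable (ξ k)) (hU : Measurable U) :
    ∀ i, @Measurable _ _ _ (noiseMS K α β γ i) (noiseFam W V ξ U i) := by
  rintro (k | k | k | u)
  · exact hW k
  · exact hV k
  · exact hξ k
  · exact hU

lemma measurableSet_Fev (W : Fin K → Ω → γ) (V : Fin K → Ω → β) (ξ : Fin K → Ω → α)
    (hW : ∀ k, Measurable (W k)) (hV : ∀ k, Measurable (V k)) (hξ : ∀ k, Measurable (ξ k))
    (Q : Fin K → γ × β × α → Prop) (k : Fin K) :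
    MeasurableSet (Fev W V ξ Q k) := by
  have : Fev W V ξ Q k
      = (fun ω => (W k ω, V k ω, ξ k ω)) ⁻¹' {z | Q k z} := rfl
  rw [this]
  exact ((hW k).prodMk ((hV k).prodMk (hξ k))) .of_discrete

/-- Core independence identity: a function of noise coordinates disjoint from the blocks
of `t` is independent of the event `⋂ k ∈ t, Fev Q k`. -/
lemma indep_core (P : Measure Ω) [IsProbabilityMeasure P]
    (W : Fin K → Ω → γ) (V : Fin K → Ω → β) (ξ : Fin K → Ω → α) (U : Ω → ℝ)
    (hW : ∀ k, Measurable (W k)) (hV : ∀ k, Measurable (V k))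
    (hξ : ∀ k, Measurable (ξ k)) (hU : Measurable U)
    (hindep : iIndepFun (m := noiseMS K α β γ) (noiseFam W V ξ U) P)
    (Q : Fin K → γ × β × α → Prop) (t : Finset (Fin K))
    (S₀ : Finset (Fin K ⊕ Fin K ⊕ Fin K ⊕ Unit)) (hdisj : Disjoint S₀ (t.biUnion (blk K)))
    (X : Ω → ℝ)
    (φ : ((i : S₀) → NoiseCodom K α β γ i) → ℝ)
    (hφ : @Measurable _ _ (@MeasurableSpace.pi _ _ (fun i : S₀ => noiseMS K α β γ i)) _ φ)
    (hX : ∀ ω, X ω = φ (fun i : S₀ => noiseFam W V ξ U i ω))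
    (hXint : Integrable X P) :
    ∫ ω, X ω * (⋂ k ∈ t, Fev W V ξ Q k).indicator 1 ω ∂P
      = (∫ ω, X ω ∂P) * (P (⋂ k ∈ t, Fev W V ξ Q k)).toReal := by
  classical
  letI : ∀ i : Fin K ⊕ Fin K ⊕ Fin K ⊕ Unit, MeasurableSpace (NoiseCodom K α β γ i) :=
    noiseMS K α β γ
  set T : Finset (Fin K ⊕ Fin K ⊕ Fin K ⊕ Unit) := t.biUnion (blk K) with hT
  have hmemW : ∀ k ∈ t, iW K k ∈ T := fun k hk => Finset.mem_biUnion.mpr ⟨k, hk, by simp [blk]⟩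
  have hmemV : ∀ k ∈ t, iV K k ∈ T := fun k hk => Finset.mem_biUnion.mpr ⟨k, hk, by simp [blk]⟩
  have hmemX : ∀ k ∈ t, iX K k ∈ T := fun k hk => Finset.mem_biUnion.mpr ⟨k, hk, by simp [blk]⟩
  set G : Set ((i : T) → NoiseCodom K α β γ i) :=
    {p | ∀ k (hk : k ∈ t),
      Q k (p ⟨iW K k, hmemW k hk⟩, p ⟨iV K k, hmemV k hk⟩, p ⟨iX K k, hmemX k hk⟩)} with hG
  have hpre : (⋂ k ∈ t, Fev W V ξ Q k)
      = (fun ω (i : T) => noiseFam W V ξ U i ω) ⁻¹' G := by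
    ext ω
    simp only [Set.mem_iInter, Set.mem_preimage, hG, Set.mem_setOf_eq, Fev]
    rfl
  have hGind : @Measurable _ _ (@MeasurableSpace.pi _ _ (fun i : T => noiseMS K α β γ i)) _
      (G.indicator (1 : ((i : T) → NoiseCodom K α β γ i) → ℝ)) :=
    measurable_noisePi (iU_not_mem_biUnion t) _
  have hmeasInter : MeasurableSet (⋂ k ∈ t, Fev W V ξ Q k) :=
    MeasurableSet.biInter t.countable_toSet fun k _ => measurableSet_Fev W V ξ hW hV hξ Q k
  have hYeq : (⋂ k ∈ t, Fev W V ξ Q k).indicator (1 : Ω → ℝ)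
      = fun ω => G.indicator 1 (fun i : T => noiseFam W V ξ U i ω) := by
    funext ω
    rw [hpre]
    simp [Set.indicator_apply, Set.mem_preimage]
  have hYint : Integrable ((⋂ k ∈ t, Fev W V ξ Q k).indicator (1 : Ω → ℝ)) P :=
    (integrable_const 1).indicator hmeasInter
  have hindepXY : IndepFun X ((⋂ k ∈ t, Fev W V ξ Q k).indicator (1 : Ω → ℝ)) P := by
    have h0 := (hindep.indepFun_finset S₀ T hdisj
        (measurable_noiseFam W V ξ U hW hV hξ hU)).comp hφ hGind
    have hXeq : X = φ ∘ (fun ω (i : S₀) => noiseFam W V ξ U i ω) := funext hX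
    rw [hXeq, hYeq]
    exact h0
  calc ∫ ω, X ω * (⋂ k ∈ t, Fev W V ξ Q k).indicator 1 ω ∂P
      = ∫ ω, (X * (⋂ k ∈ t, Fev W V ξ Q k).indicator 1 : Ω → ℝ) ω ∂P := rfl
    _ = (∫ ω, X ω ∂P) * ∫ ω, (⋂ k ∈ t, Fev W V ξ Q k).indicator 1 ω ∂P :=
        hindepXY.integral_mul_eq_mul_integral hXint.aestronglyMeasurable hYint.aestronglyMeasurable
    _ = (∫ ω, X ω ∂P) * (P (⋂ k ∈ t, Fev W V ξ Q k)).toReal := by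
        rw [integral_indicator_one hmeasInter, measureReal_def]

end IndepCore

section Derived

variable {Ω : Type} [MeasurableSpace Ω] {K : ℕ} {α β γ : Type}
  [Fintype α] [MeasurableSpace α] [MeasurableSingletonClass α]
  [Fintype β] [MeasurableSpace β] [MeasurableSingletonClass β]
  [Fintype γ] [MeasurableSpace γ] [MeasurableSingletonClass γ]
  (P : Measure Ω) [IsProbabilityMeasure P]

/-- A composition of any function with a measurable map into a finite discrete space
is integrable. -/
lemma integrable_comp_fin {τ : Type} [Fintype τ] [MeasurableSpace τ]
    [MeasurableSingletonClass τ] {T : Ω → τ} (hT : Measurable T) (φ : τ → ℝ) :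
    Integrable (fun ω => φ (T ω)) P := by
  have heq : (fun ω => φ (T ω))
      = fun ω => ∑ c : τ, (T ⁻¹' {c}).indicator (fun _ => φ c) ω := by
    funext ω
    rw [Finset.sum_eq_single (T ω)]
    · simp [Set.indicator_apply]
    · intro c _ hc
      simp [Set.indicator_apply, Set.mem_preimage, Ne.symm hc]
    · simp
  rw [heq]
  exact integrable_finset_sum _ fun c _ =>
    (integrable_const (φ c)).indicator (hT (measurableSet_singleton c))

lemma blk_disjoint {j : Fin K} {t : Finset (Fin K)} (hj : j ∉ t) :
    Disjoint (blk K j) (t.biUnion (blk K)) := by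
  rw [Finset.disjoint_left]
  intro i hi hmem
  rcases Finset.mem_biUnion.mp hmem with ⟨k, hk, hik⟩
  simp only [blk, Finset.mem_insert, Finset.mem_singleton] at hi hik
  rcases hi with rfl | rfl | rfl <;> rcases hik with h' | h' | h' <;> simp_all [iW, iV, iX] <;>
    exact hj (h' ▸ hk)

variable (W : Fin K → Ω → γ) (V : Fin K → Ω → β) (ξ : Fin K → Ω → α) (U : Ω → ℝ)
  (hW : ∀ k, Measurable (W k)) (hV : ∀ k, Measurable (V k))
  (hξ : ∀ k, Measurable (ξ k)) (hU : Measurable U)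
  (hindep : iIndepFun (m := noiseMS K α β γ) (noiseFam W V ξ U) P)

include hW hV hξ hU hindep in
lemma block_integral (Q : Fin K → γ × β × α → Prop) {j : Fin K} {t : Finset (Fin K)}
    (hj : j ∉ t) (h : γ × β × α → ℝ) :
    ∫ ω, h (W j ω, V j ω, ξ j ω) * (⋂ k ∈ t, Fev W V ξ Q k).indicator 1 ω ∂P
      = (∫ ω, h (W j ω, V j ω, ξ j ω) ∂P) * (P (⋂ k ∈ t, Fev W V ξ Q k)).toReal := by
  classical
  have m₁ : iW K j ∈ blk K j := by simp [blk]
  have m₂ : iV K j ∈ blk K j := by simp [blk]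
  have m₃ : iX K j ∈ blk K j := by simp [blk]
  refine indep_core P W V ξ U hW hV hξ hU hindep Q t (blk K j) (blk_disjoint hj) _
    (fun p => h (p ⟨iW K j, m₁⟩, p ⟨iV K j, m₂⟩, p ⟨iX K j, m₃⟩)) ?_ (fun ω => rfl) ?_
  · exact measurable_noisePi (by simp [blk]) _
  · exact integrable_comp_fin P ((hW j).prodMk ((hV j).prodMk (hξ j))) h

include hW hV hξ hU hindep in
lemma U_integral (Q : Fin K → γ × β × α → Prop) (t : Finset (Fin K))
    (hUint : Integrable U P) :
    ∫ ω, U ω * (⋂ k ∈ t, Fev W V ξ Q k).indicator 1 ω ∂P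
      = (∫ ω, U ω ∂P) * (P (⋂ k ∈ t, Fev W V ξ Q k)).toReal := by
  classical
  refine indep_core P W V ξ U hW hV hξ hU hindep Q t {iU K} ?_ _
    (fun p => p ⟨iU K, Finset.mem_singleton_self _⟩) ?_ (fun ω => rfl) hUint
  · rw [Finset.disjoint_left]
    intro i hi hmem
    rcases Finset.mem_biUnion.mp hmem with ⟨k, hk, hik⟩
    rw [Finset.mem_singleton] at hi
    subst hi
    simp [blk, iW, iV, iX, iU] at hik
  · letI : ∀ i : ({iU K} : Finset (Fin K ⊕ Fin K ⊕ Fin K ⊕ Unit)),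
        MeasurableSpace (NoiseCodom K α β γ i) := fun i => noiseMS K α β γ i
    exact measurable_pi_apply _

include hW hV hξ hU hindep in
lemma inter_toReal (Q : Fin K → γ × β × α → Prop) (t : Finset (Fin K)) :
    (P (⋂ k ∈ t, Fev W V ξ Q k)).toReal = ∏ k ∈ t, (P (Fev W V ξ Q k)).toReal := by
  classical
  induction t using Finset.induction with
  | empty => simp
  | @insert j t hj ih =>
    have h1 : (⋂ k ∈ insert j t, Fev W V ξ Q k)
        = Fev W V ξ Q j ∩ ⋂ k ∈ t, Fev W V ξ Q k := by
      rw [Finset.set_biInter_insert]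
    have hFj : MeasurableSet (Fev W V ξ Q j) := measurableSet_Fev W V ξ hW hV hξ Q j
    have hIt : MeasurableSet (⋂ k ∈ t, Fev W V ξ Q k) :=
      MeasurableSet.biInter t.countable_toSet fun k _ => measurableSet_Fev W V ξ hW hV hξ Q k
    have hind : ∀ ω, (Fev W V ξ Q j).indicator (1 : Ω → ℝ) ω
        = (fun z => if Q j z then (1:ℝ) else 0) (W j ω, V j ω, ξ j ω) := by
      intro ω; simp [Set.indicator_apply, Fev]
    calc (P (⋂ k ∈ insert j t, Fev W V ξ Q k)).toReal
        = ∫ ω, (Fev W V ξ Q j ∩ ⋂ k ∈ t, Fev W V ξ Q k).indicator 1 ω ∂P := by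
          rw [h1, integral_indicator_one (hFj.inter hIt), measureReal_def]
      _ = ∫ ω, (fun z => if Q j z then (1:ℝ) else 0) (W j ω, V j ω, ξ j ω)
            * (⋂ k ∈ t, Fev W V ξ Q k).indicator 1 ω ∂P := by
          congr 1; funext ω
          rw [Set.inter_indicator_one, Pi.mul_apply, hind ω]
      _ = (∫ ω, (fun z => if Q j z then (1:ℝ) else 0) (W j ω, V j ω, ξ j ω) ∂P)
            * (P (⋂ k ∈ t, Fev W V ξ Q k)).toReal :=
          block_integral P W V ξ U hW hV hξ hU hindep Q hj (fun z => if Q j z then (1:ℝ) else 0)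
      _ = (P (Fev W V ξ Q j)).toReal * ∏ k ∈ t, (P (Fev W V ξ Q k)).toReal := by
          rw [ih]
          have heq2 : (fun ω => (fun z => if Q j z then (1:ℝ) else 0) (W j ω, V j ω, ξ j ω))
              = (Fev W V ξ Q j).indicator 1 := by
            funext ω; exact (hind ω).symm
          rw [show (∫ ω, (fun z => if Q j z then (1:ℝ) else 0) (W j ω, V j ω, ξ j ω) ∂P)
              = ∫ ω, (Fev W V ξ Q j).indicator 1 ω ∂P from congrArg (integral P) heq2]
          rw [integral_indicator_one hFj, measureReal_def]
      _ = ∏ k ∈ insert j t, (P (Fev W V ξ Q k)).toReal := by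
          rw [Finset.prod_insert hj]

end Derived

lemma ratio_helper {n p q : ℝ} (hp : p ≠ 0) (hq : q ≠ 0) : (q * p)⁻¹ * (n * p) = n / q := by
  field_simp

/-- Ratio defining a conditional-expectation contribution of one term. -/
noncomputable def rho {Ω : Type} [MeasurableSpace Ω] (P : Measure Ω) (F : Set Ω)
    (φf : Ω → ℝ) : ℝ :=
  (∫ ω, φf ω * F.indicator 1 ω ∂P) / (P F).toReal

section Master

variable {Ω : Type} [MeasurableSpace Ω] {K : ℕ} {α β γ : Type}
  [Fintype α] [MeasurableSpace α] [MeasurableSingletonClass α]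
  [Fintype β] [MeasurableSpace β] [MeasurableSingletonClass β]
  [Fintype γ] [MeasurableSpace γ] [MeasurableSingletonClass γ]
  (P : Measure Ω) [IsProbabilityMeasure P]
  (W : Fin K → Ω → γ) (V : Fin K → Ω → β) (ξ : Fin K → Ω → α) (U : Ω → ℝ)
  (hW : ∀ k, Measurable (W k)) (hV : ∀ k, Measurable (V k))
  (hξ : ∀ k, Measurable (ξ k)) (hU : Measurable U)
  (hindep : iIndepFun (m := noiseMS K α β γ) (noiseFam W V ξ U) P)

include hW hV hξ hU hindep in
lemma master (hUint : Integrable U P) (hU0 : ∫ ω, U ω ∂P = 0)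
    (g : (k : Fin K) → ((i : Fin K) → i < k → α) → γ → β → α)
    (f : Fin K → α → γ → ℝ) (S : Finset (Fin K)) (a : Fin K → α)
    (hpos : 0 < P (eventEq (Amix g W V ξ S) a)) :
    ∫ ω, outcome f (Amix g W V ξ S) W U ω ∂(P[|eventEq (Amix g W V ξ S) a])
      = ∑ k, rho P (Fev W V ξ (Qpred g S a) k) (fun ω => f k (a k) (W k ω)) := by
  classical
  set Q : Fin K → γ × β × α → Prop := Qpred g S a with hQ
  set E : Set Ω := eventEq (Amix g W V ξ S) a with hE
  have hEI : E = ⋂ k ∈ Finset.univ, Fev W V ξ Q k := by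
    rw [hE, eventEq_amix]; ext ω; simp [hQ]
  have hFmeas : ∀ k, MeasurableSet (Fev W V ξ Q k) :=
    fun k => measurableSet_Fev W V ξ hW hV hξ Q k
  have hEmeas : MeasurableSet E := by
    rw [hEI]; exact MeasurableSet.biInter (Finset.univ.countable_toSet) fun k _ => hFmeas k
  have htR : (P E).toReal = ∏ k, (P (Fev W V ξ Q k)).toReal := by
    rw [hEI]; exact inter_toReal P W V ξ U hW hV hξ hU hindep Q Finset.univ
  have hpRpos : 0 < (P E).toReal := ENNReal.toReal_pos hpos.ne' (measure_ne_top P E)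
  have hpk : ∀ k, (P (Fev W V ξ Q k)).toReal ≠ 0 := by
    intro k h
    rw [htR] at hpRpos
    exact hpRpos.ne' (Finset.prod_eq_zero (Finset.mem_univ k) h)
  -- conditional integral as normalized indicator integral
  have hcondInt : ∫ ω, outcome f (Amix g W V ξ S) W U ω ∂(P[|E])
      = (P E).toReal⁻¹ * ∫ ω, E.indicator (outcome f (Amix g W V ξ S) W U) ω ∂P := by
    rw [ProbabilityTheory.cond, integral_smul_measure, ENNReal.toReal_inv,
      ← integral_indicator hEmeas, smul_eq_mul]
  -- pointwise decomposition on the event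
  have hdecomp : E.indicator (outcome f (Amix g W V ξ S) W U)
      = fun ω => (∑ k, f k (a k) (W k ω) * E.indicator 1 ω) + U ω * E.indicator 1 ω := by
    funext ω
    by_cases hω : ω ∈ E
    · have hA : ∀ k, Amix g W V ξ S k ω = a k := fun k => Set.mem_iInter.mp hω k
      simp [Set.indicator_of_mem hω, outcome, hA]
    · simp [Set.indicator_of_notMem hω]
  have hintk : ∀ k, Integrable (fun ω => f k (a k) (W k ω) * E.indicator 1 ω) P := by
    intro k
    have heq : (fun ω => f k (a k) (W k ω) * E.indicator 1 ω)
        = E.indicator (fun ω => f k (a k) (W k ω)) := by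
      funext ω
      by_cases hω : ω ∈ E <;>
        simp [Set.indicator_of_mem, Set.indicator_of_notMem, hω]
    rw [heq]; exact (integrable_comp_fin P (hW k) (f k (a k))).indicator hEmeas
  have hintU : Integrable (fun ω => U ω * E.indicator 1 ω) P := by
    have heq : (fun ω => U ω * E.indicator 1 ω) = E.indicator U := by
      funext ω
      by_cases hω : ω ∈ E <;>
        simp [Set.indicator_of_mem, Set.indicator_of_notMem, hω]
    rw [heq]; exact hUint.indicator hEmeas
  have hUterm : ∫ ω, U ω * E.indicator 1 ω ∂P = 0 := by
    rw [hEI]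
    rw [U_integral P W V ξ U hW hV hξ hU hindep Q Finset.univ hUint, hU0, zero_mul]
  have hterm : ∀ k, ∫ ω, f k (a k) (W k ω) * E.indicator 1 ω ∂P
      = (∫ ω, f k (a k) (W k ω) * (Fev W V ξ Q k).indicator 1 ω ∂P)
        * ∏ i ∈ Finset.univ.erase k, (P (Fev W V ξ Q i)).toReal := by
    intro k
    have hsplit : E.indicator (1 : Ω → ℝ)
        = fun ω => (Fev W V ξ Q k).indicator 1 ω
            * (⋂ i ∈ Finset.univ.erase k, Fev W V ξ Q i).indicator 1 ω := by
      conv_lhs => rw [hEI, ← Finset.insert_erase (Finset.mem_univ k)]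
      rw [Finset.set_biInter_insert, Set.inter_indicator_one]
      rfl
    calc ∫ ω, f k (a k) (W k ω) * E.indicator 1 ω ∂P
        = ∫ ω, (fun z : γ × β × α => f k (a k) z.1 * (if Q k z then (1:ℝ) else 0))
              (W k ω, V k ω, ξ k ω)
            * (⋂ i ∈ Finset.univ.erase k, Fev W V ξ Q i).indicator 1 ω ∂P := by
          congr 1; funext ω
          rw [hsplit]
          simp only [Set.indicator_apply, Fev, Set.mem_setOf_eq, Pi.one_apply]
          ring
      _ = (∫ ω, (fun z : γ × β × α => f k (a k) z.1 * (if Q k z then (1:ℝ) else 0))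
              (W k ω, V k ω, ξ k ω) ∂P)
            * (P (⋂ i ∈ Finset.univ.erase k, Fev W V ξ Q i)).toReal :=
          block_integral P W V ξ U hW hV hξ hU hindep Q (Finset.notMem_erase k _)
            (fun z : γ × β × α => f k (a k) z.1 * (if Q k z then (1:ℝ) else 0))
      _ = (∫ ω, f k (a k) (W k ω) * (Fev W V ξ Q k).indicator 1 ω ∂P)
            * ∏ i ∈ Finset.univ.erase k, (P (Fev W V ξ Q i)).toReal := by
          rw [inter_toReal P W V ξ U hW hV hξ hU hindep Q]
          have heq3 : (fun ω => (fun z : γ × β × α => f k (a k) z.1 * (if Q k z then (1:ℝ) else 0))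
                (W k ω, V k ω, ξ k ω))
              = fun ω => f k (a k) (W k ω) * (Fev W V ξ Q k).indicator 1 ω := by
            funext ω
            simp only [Set.indicator_apply, Fev, Set.mem_setOf_eq, Pi.one_apply]
          rw [heq3]
  rw [hcondInt, hdecomp]
  rw [integral_add (integrable_finset_sum _ fun k _ => hintk k) hintU]
  rw [integral_finset_sum _ fun k _ => hintk k, hUterm, add_zero]
  rw [Finset.mul_sum]
  refine Finset.sum_congr rfl fun k _ => ?_
  rw [hterm k, rho, htR, ← Finset.mul_prod_erase _ _ (Finset.mem_univ k)]
  have hprodne : (∏ i ∈ Finset.univ.erase k, (P (Fev W V ξ Q i)).toReal) ≠ 0 :=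
    Finset.prod_ne_zero_iff.mpr fun i _ => hpk i
  exact ratio_helper hprodne (hpk k)

end Master

section Convert

variable {Ω α β γ : Type} {K : ℕ}
  (g : (k : Fin K) → ((i : Fin K) → i < k → α) → γ → β → α)
  (W : Fin K → Ω → γ) (V : Fin K → Ω → β) (ξ : Fin K → Ω → α) (U : Ω → ℝ)

lemma eventEq_aobs (a : Fin K → α) :
    eventEq (Aobs g W V) a = eventEq (Amix g W V ξ ∅) a := by
  ext ω; simp [eventEq, Aobs_eq_Amix g W V ξ]

lemma outcome_aobs (f : Fin K → α → γ → ℝ) :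
    outcome f (Aobs g W V) W U = outcome f (Amix g W V ξ ∅) W U := by
  funext ω; simp [outcome, Aobs_eq_Amix g W V ξ]

lemma eventEq_asingle (j : Fin K) (a : Fin K → α) :
    eventEq (Asingle g W V ξ j) a = eventEq (Amix g W V ξ {j}) a := by
  ext ω; simp [eventEq, Asingle_eq_Amix g W V ξ j]

lemma outcome_asingle (f : Fin K → α → γ → ℝ) (j : Fin K) :
    outcome f (Asingle g W V ξ j) W U = outcome f (Amix g W V ξ {j}) W U := by
  funext ω; simp [outcome, Asingle_eq_Amix g W V ξ j]

lemma Fev_Qpred_mem {S : Finset (Fin K)} {a : Fin K → α} {k : Fin K} (hk : k ∈ S) :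
    Fev W V ξ (Qpred g S a) k = {ω | ξ k ω = a k} := by
  ext ω; simp [Fev, Qpred, hk]

lemma Fev_Qpred_notmem {S : Finset (Fin K)} {a : Fin K → α} {k : Fin K} (hk : k ∉ S) :
    Fev W V ξ (Qpred g S a) k
      = {ω | g k (fun i _ => a i) (W k ω) (V k ω) = a k} := by
  ext ω; simp [Fev, Qpred, hk]

end Convert
/-- **Proposition 1 (discrete, constructive form).** Under the support condition, any
estimator family fitted to the observational and single-intervention conditional
expectations identifies every mixed interventional effect. -/
theorem mixed_effect_identifiable
    {Ω : Type} [MeasurableSpace Ω] (P : MeasureTheory.Measure Ω) [MeasureTheory.IsProbabilityMeasure P]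
    {K : ℕ} (hK : 1 ≤ K)
    {α β γ : Type} [Fintype α] [Nonempty α] [MeasurableSpace α] [MeasurableSingletonClass α]
    [Fintype β] [Nonempty β] [MeasurableSpace β] [MeasurableSingletonClass β]
    [Fintype γ] [Nonempty γ] [MeasurableSpace γ] [MeasurableSingletonClass γ]
    (W : Fin K → Ω → γ) (V : Fin K → Ω → β) (ξ : Fin K → Ω → α) (U : Ω → ℝ)
    (hW : ∀ k, Measurable (W k)) (hV : ∀ k, Measurable (V k))
    (hξ : ∀ k, Measurable (ξ k)) (hU : Measurable U)
    (hindep : iIndepFun (m := noiseMS K α β γ) (noiseFam W V ξ U) P)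
    (hUint : MeasureTheory.Integrable U P) (hU0 : ∫ ω, U ω ∂P = 0)
    (g : (k : Fin K) → ((i : Fin K) → i < k → α) → γ → β → α)
    (f : Fin K → α → γ → ℝ)
    (hsupS : ∀ (j : Fin K) (a : Fin K → α),
      0 < P (eventEq (Aobs g W V) a) ↔ 0 < P (eventEq (Asingle g W V ξ j) a))
    (hsupM : ∀ (S : Finset (Fin K)) (a : Fin K → α),
      0 < P (eventEq (Aobs g W V) a) ↔ 0 < P (eventEq (Amix g W V ξ S) a))
    (fhat : Fin K → (Fin K → α) → Bool → ℝ)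
    (hfitObs : ∀ a : Fin K → α, 0 < P (eventEq (Aobs g W V) a) →
      ∑ k, fhat k a false
        = ∫ ω, outcome f (Aobs g W V) W U ω ∂(P[|eventEq (Aobs g W V) a]))
    (hfitSint : ∀ (j : Fin K) (a : Fin K → α),
      0 < P (eventEq (Asingle g W V ξ j) a) →
      fhat j a true + ∑ k ∈ Finset.univ.erase j, fhat k a false
        = ∫ ω, outcome f (Asingle g W V ξ j) W U ω
            ∂(P[|eventEq (Asingle g W V ξ j) a])) :
    ∀ (S : Finset (Fin K)) (a : Fin K → α), 0 < P (eventEq (Amix g W V ξ S) a) →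
      (∑ k ∈ S, fhat k a true) + ∑ k ∈ Sᶜ, fhat k a false
        = ∫ ω, outcome f (Amix g W V ξ S) W U ω
            ∂(P[|eventEq (Amix g W V ξ S) a]) := by

  classical
  intro S a hposS
  have hobs : 0 < P (eventEq (Aobs g W V) a) := (hsupM S a).mpr hposS
  have hobs' : 0 < P (eventEq (Amix g W V ξ ∅) a) := by
    rwa [eventEq_aobs g W V ξ a] at hobs
  -- observational fit in terms of M-values
  have hO : ∑ k, fhat k a false
      = ∑ k, rho P {ω | g k (fun i _ => a i) (W k ω) (V k ω) = a k}
          (fun ω => f k (a k) (W k ω)) := by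
    have h1 := hfitObs a hobs
    rw [eventEq_aobs g W V ξ a, outcome_aobs g W V ξ U f] at h1
    rw [h1, master P W V ξ U hW hV hξ hU hindep hUint hU0 g f ∅ a hobs']
    refine Finset.sum_congr rfl fun k _ => ?_
    rw [Fev_Qpred_notmem g W V ξ (Finset.notMem_empty k)]
  -- single-intervention fits
  have hSint : ∀ j ∈ S, fhat j a true
      = fhat j a false
        + (rho P {ω | ξ j ω = a j} (fun ω => f j (a j) (W j ω))
          - rho P {ω | g j (fun i _ => a i) (W j ω) (V j ω) = a j}
              (fun ω => f j (a j) (W j ω))) := by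
    intro j _
    have hsing : 0 < P (eventEq (Asingle g W V ξ j) a) := (hsupS j a).mp hobs
    have hsing' : 0 < P (eventEq (Amix g W V ξ {j}) a) := by
      rwa [eventEq_asingle g W V ξ j a] at hsing
    have h1 := hfitSint j a hsing
    rw [eventEq_asingle g W V ξ j a, outcome_asingle g W V ξ U f j] at h1
    rw [master P W V ξ U hW hV hξ hU hindep hUint hU0 g f {j} a hsing'] at h1
    have h2 : ∑ k, rho P (Fev W V ξ (Qpred g {j} a) k) (fun ω => f k (a k) (W k ω))
        = rho P {ω | ξ j ω = a j} (fun ω => f j (a j) (W j ω))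
          + ∑ k ∈ Finset.univ.erase j,
              rho P {ω | g k (fun i _ => a i) (W k ω) (V k ω) = a k}
                (fun ω => f k (a k) (W k ω)) := by
      conv_lhs => rw [← Finset.insert_erase (Finset.mem_univ j),
        Finset.sum_insert (Finset.notMem_erase j _)]
      congr 1
      · rw [Fev_Qpred_mem g W V ξ (Finset.mem_singleton_self j)]
      · refine Finset.sum_congr rfl fun k hk => ?_
        rw [Fev_Qpred_notmem g W V ξ
          (by simpa using (Finset.mem_erase.mp hk).1)]
    have h3 : fhat j a false + ∑ k ∈ Finset.univ.erase j, fhat k a false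
        = ∑ k, fhat k a false :=
      Finset.add_sum_erase _ (fun k => fhat k a false) (Finset.mem_univ j)
    have h4 : rho P {ω | g j (fun i _ => a i) (W j ω) (V j ω) = a j}
          (fun ω => f j (a j) (W j ω))
        + ∑ k ∈ Finset.univ.erase j,
            rho P {ω | g k (fun i _ => a i) (W k ω) (V k ω) = a k}
              (fun ω => f k (a k) (W k ω))
        = ∑ k, rho P {ω | g k (fun i _ => a i) (W k ω) (V k ω) = a k}
            (fun ω => f k (a k) (W k ω)) :=
      Finset.add_sum_erase _ (fun k => rho P {ω | g k (fun i _ => a i) (W k ω) (V k ω) = a k}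
        (fun ω => f k (a k) (W k ω))) (Finset.mem_univ j)
    rw [h2] at h1
    linarith [h1, h3, h4, hO]
  -- master formula for the mixed model
  have hMain := master P W V ξ U hW hV hξ hU hindep hUint hU0 g f S a hposS
  have hsplitS : ∑ k, rho P (Fev W V ξ (Qpred g S a) k) (fun ω => f k (a k) (W k ω))
      = ∑ k ∈ S, rho P {ω | ξ k ω = a k} (fun ω => f k (a k) (W k ω))
        + ∑ k ∈ Sᶜ, rho P {ω | g k (fun i _ => a i) (W k ω) (V k ω) = a k}
            (fun ω => f k (a k) (W k ω)) := by
    rw [← Finset.sum_add_sum_compl S]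
    congr 1
    · exact Finset.sum_congr rfl fun k hk => by rw [Fev_Qpred_mem g W V ξ hk]
    · exact Finset.sum_congr rfl fun k hk => by
        rw [Fev_Qpred_notmem g W V ξ (Finset.mem_compl.mp hk)]
  rw [hMain, hsplitS]
  have h5 : ∑ k ∈ S, fhat k a true
      = ∑ k ∈ S, (fhat k a false
        + (rho P {ω | ξ k ω = a k} (fun ω => f k (a k) (W k ω))
          - rho P {ω | g k (fun i _ => a i) (W k ω) (V k ω) = a k}
              (fun ω => f k (a k) (W k ω)))) :=
    Finset.sum_congr rfl fun k hk => hSint k hk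
  rw [h5, Finset.sum_add_distrib]
  have h6 : ∑ k ∈ S, fhat k a false + ∑ k ∈ Sᶜ, fhat k a false
      = ∑ k, fhat k a false := Finset.sum_add_sum_compl S _
  have h7 : ∑ k ∈ S, rho P {ω | g k (fun i _ => a i) (W k ω) (V k ω) = a k}
        (fun ω => f k (a k) (W k ω))
      + ∑ k ∈ Sᶜ, rho P {ω | g k (fun i _ => a i) (W k ω) (V k ω) = a k}
        (fun ω => f k (a k) (W k ω))
      = ∑ k, rho P {ω | g k (fun i _ => a i) (W k ω) (V k ω) = a k}
          (fun ω => f k (a k) (W k ω)) := Finset.sum_add_sum_compl S _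
  have h8 : ∑ k ∈ S, (rho P {ω | ξ k ω = a k} (fun ω => f k (a k) (W k ω))
        - rho P {ω | g k (fun i _ => a i) (W k ω) (V k ω) = a k}
            (fun ω => f k (a k) (W k ω)))
      = ∑ k ∈ S, rho P {ω | ξ k ω = a k} (fun ω => f k (a k) (W k ω))
        - ∑ k ∈ S, rho P {ω | g k (fun i _ => a i) (W k ω) (V k ω) = a k}
            (fun ω => f k (a k) (W k ω)) := Finset.sum_sub_distrib _ _
  linarith [hO, h6, h7, h8]
end

section
/- Let 𝔅 be a partition of Fin K into nonempty pairwise-disjoint blocks, and write B(k) for the block containing k. Suppose the actions are defined recursively by A_k := g_k((A_i)_{i<k}, (C_i)_{i ∈ B(k)}, V_k) (each action may depend on all confounders of its block) and the outcome is Y := Σ_{B ∈ 𝔅} f_B((A_i)_{i ∈ B}, (C_i)_{i ∈ B}) + U for given functions f_B. For a block B define the block-intervention model: A^B_k := ξ_k if k ∈ B and A^B_k := g_k((A^B_i)_{i<k}, (C_i)_{i ∈ B(k)}, V_k) otherwise, with outcome Y^B := Σ_{B' ∈ 𝔅} f_{B'}((A^B_i)_{i ∈ B'}, (C_i)_{i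 ∈ B'}) + U; the joint-intervention model sets Ā_k := ξ_k for all k, with outcome Ȳ defined analogously. Assume the support condition: for every a : Fin K → α, the events {A = a}, {Ā = a}, and {A^B = a} (for every B ∈ 𝔅) have positive probability simultaneously. Suppose an estimator family f̂ : 𝔅 → (Fin K → α) → Bool → ℝ satisfies: for every a with P({A = a}) > 0, Σ_{B ∈ 𝔅} f̂_B a false = E[Y | {A = a}]; and for every B ∈ 𝔅 and every a with P({A^B = a}) > 0, f̂_B a true + Σ_{B' ≠ B} f̂_{B'} a false = E[Y^B | {A^B = a}]. Then for every a with P({Ā = a}) > 0: Σ_{B ∈ 𝔅} f̂_B a true = E[Ȳ | {Ā = a}]. -/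
open MeasureTheory ProbabilityTheory
open scoped ENNReal
set_option linter.unusedSectionVars false
set_option linter.unusedVariables false
set_option maxHeartbeats 1000000

/-- A partition of `Fin K` into nonempty pairwise-disjoint blocks is encoded by a
surjective block-assignment map `π : Fin K → ι`; the block containing `k` is the fiber
`π ⁻¹ {π k}`.  Observational actions for the partitioned model:
`A_k := g_k((A_i)_{i<k}, (C_i)_{i ∈ B(k)}, V_k)`, with `C_i := W_i`. -/
def AobsP {Ω α β γ : Type} {K : ℕ} {ι : Type} (π : Fin K → ι)
    (g : (k : Fin K) → ((i : Fin K) → i < k → α) → ((i : Fin K) → π i = π k → γ) → β → α)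
    (W : Fin K → Ω → γ) (V : Fin K → Ω → β) (k : Fin K) (ω : Ω) : α :=
  g k (fun i _ => AobsP π g W V i ω) (fun i _ => W i ω) (V k ω)
termination_by k.1
decreasing_by exact ‹_ < k›

/-- Block-intervention actions `do(A_B)` for the block `B = π ⁻¹ {b}`:
`A^B_k := ξ_k` if `π k = b`, and `A^B_k := g_k((A^B_i)_{i<k}, (C_i)_{i ∈ B(k)}, V_k)`
otherwise. -/
def AblockP {Ω α β γ : Type} {K : ℕ} {ι : Type} [DecidableEq ι] (π : Fin K → ι)
    (g : (k : Fin K) → ((i : Fin K) → i < k → α) → ((i : Fin K) → π i = π k → γ) → β → α)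
    (W : Fin K → Ω → γ) (V : Fin K → Ω → β) (ξ : Fin K → Ω → α) (b : ι)
    (k : Fin K) (ω : Ω) : α :=
  if π k = b then ξ k ω
  else g k (fun i _ => AblockP π g W V ξ b i ω) (fun i _ => W i ω) (V k ω)
termination_by k.1
decreasing_by exact ‹_ < k›

/-- The partition-additive outcome `Y := Σ_{B ∈ 𝔅} f_B((A_i)_{i ∈ B}, (C_i)_{i ∈ B}) + U`
for a given family of actions. -/
def outcomeP {Ω α γ : Type} {K : ℕ} {ι : Type} [Fintype ι] (π : Fin K → ι)
    (f : (b : ι) → ((i : Fin K) → π i = b → α) → ((i : Fin K) → π i = b → γ) → ℝ)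
    (A : Fin K → Ω → α) (W : Fin K → Ω → γ) (U : Ω → ℝ) (ω : Ω) : ℝ :=
  (∑ b : ι, f b (fun i _ => A i ω) (fun i _ => W i ω)) + U ω

section AuxLemmas

variable {Ω α β γ : Type} {K : ℕ} {ι : Type}

lemma key_aux {Ω : Type} [mΩ : MeasurableSpace Ω] (P : Measure Ω) [IsProbabilityMeasure P]
    {m1 m2 : MeasurableSpace Ω} (h1 : m1 ≤ mΩ) (h2 : m2 ≤ mΩ)
    (hInd : ProbabilityTheory.Indep m1 m2 P) {X : Ω → ℝ}
    (hXm : Measurable[m1] X) (hXint : Integrable X P)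
    {T₁ T₂ : Set Ω} (hT1 : MeasurableSet[m1] T₁) (hT2 : MeasurableSet[m2] T₂)
    (hpos : P (T₁ ∩ T₂) ≠ 0) :
    (P (T₁ ∩ T₂)).toReal⁻¹ * ∫ ω in T₁ ∩ T₂, X ω ∂P
      = (P T₁).toReal⁻¹ * ∫ ω in T₁, X ω ∂P := by
  have hprod : P (T₁ ∩ T₂) = P T₁ * P T₂ := (Indep_iff m1 m2 P).mp hInd T₁ T₂ hT1 hT2
  have hT1' : MeasurableSet[mΩ] T₁ := h1 _ hT1
  have hT2' : MeasurableSet[mΩ] T₂ := h2 _ hT2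
  have hY : Measurable[m1] (T₁.indicator X) := hXm.indicator hT1
  have hZ : Measurable[m2] (T₂.indicator (fun _ => (1:ℝ))) := measurable_const.indicator hT2
  have hIndF : ProbabilityTheory.IndepFun (T₁.indicator X) (T₂.indicator fun _ => (1:ℝ)) P := by
    rw [IndepFun_iff_Indep]
    exact indep_of_indep_of_le_right
      (indep_of_indep_of_le_left hInd (measurable_iff_comap_le.mp hY))
      (measurable_iff_comap_le.mp hZ)
  clear hInd hT1 hT2 hY hZ hXm h1 h2 m1 m2
  have hYint : Integrable (T₁.indicator X) P := hXint.indicator hT1'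
  have hZint : Integrable (T₂.indicator fun _ => (1:ℝ)) P := (integrable_const 1).indicator hT2'
  have hmul := hIndF.integral_mul_eq_mul_integral hYint.aestronglyMeasurable hZint.aestronglyMeasurable
  have he1 : (T₁.indicator X) * (T₂.indicator fun _ => (1:ℝ)) = (T₁ ∩ T₂).indicator X := by
    funext ω
    by_cases h1ω : ω ∈ T₁ <;> by_cases h2ω : ω ∈ T₂ <;>
      simp [Set.indicator, h1ω, h2ω, Set.mem_inter_iff]
  rw [he1, integral_indicator (hT1'.inter hT2'), integral_indicator hT1',
    integral_indicator hT2'] at hmul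
  have h2v : ∫ ω in T₂, (1:ℝ) ∂P = (P T₂).toReal := by simp [Measure.real]
  rw [h2v] at hmul
  have hne1 : P T₁ ≠ 0 := fun h => hpos (by rw [hprod, h, zero_mul])
  have hne2 : P T₂ ≠ 0 := fun h => hpos (by rw [hprod, h, mul_zero])
  have h2r : (P T₂).toReal ≠ 0 := ENNReal.toReal_ne_zero.mpr ⟨hne2, measure_ne_top P T₂⟩
  have h1r : (P T₁).toReal ≠ 0 := ENNReal.toReal_ne_zero.mpr ⟨hne1, measure_ne_top P T₁⟩
  rw [hmul, hprod, ENNReal.toReal_mul]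
  field_simp

lemma cond_integral_s14 {Ω : Type} [MeasurableSpace Ω] (P : Measure Ω) (S : Set Ω) (X : Ω → ℝ) :
    ∫ ω, X ω ∂(P[|S]) = (P S).toReal⁻¹ * ∫ ω in S, X ω ∂P := by
  rw [ProbabilityTheory.cond, integral_smul_measure, ENNReal.toReal_inv, smul_eq_mul]

lemma AobsP_eq (π : Fin K → ι)
    (g : (k : Fin K) → ((i : Fin K) → i < k → α) → ((i : Fin K) → π i = π k → γ) → β → α)
    (W : Fin K → Ω → γ) (V : Fin K → Ω → β) (k : Fin K) (ω : Ω) :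
    AobsP π g W V k ω
      = g k (fun i _ => AobsP π g W V i ω) (fun i _ => W i ω) (V k ω) := by
  rw [AobsP]

lemma AblockP_eq [DecidableEq ι] (π : Fin K → ι)
    (g : (k : Fin K) → ((i : Fin K) → i < k → α) → ((i : Fin K) → π i = π k → γ) → β → α)
    (W : Fin K → Ω → γ) (V : Fin K → Ω → β) (ξ : Fin K → Ω → α) (b : ι) (k : Fin K) (ω : Ω) :
    AblockP π g W V ξ b k ω = if π k = b then ξ k ω
      else g k (fun i _ => AblockP π g W V ξ b i ω) (fun i _ => W i ω) (V k ω) := by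
  rw [AblockP]

lemma eventEq_AobsP (π : Fin K → ι)
    (g : (k : Fin K) → ((i : Fin K) → i < k → α) → ((i : Fin K) → π i = π k → γ) → β → α)
    (W : Fin K → Ω → γ) (V : Fin K → Ω → β) (a : Fin K → α) :
    eventEq (AobsP π g W V) a
      = ⋂ k, {ω | g k (fun i _ => a i) (fun i _ => W i ω) (V k ω) = a k} := by
  ext ω
  simp only [eventEq, Set.mem_iInter, Set.mem_setOf_eq]
  constructor
  · intro h k
    have hk := h k
    rw [AobsP_eq] at hk
    have he : (fun i (_ : i < k) => AobsP π g W V i ω) = fun i _ => a i := by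
      funext i hi; exact h i
    rwa [he] at hk
  · intro h
    have H : ∀ n, ∀ k : Fin K, k.1 < n → AobsP π g W V k ω = a k := by
      intro n
      induction n with
      | zero => exact fun k hk => absurd hk (Nat.not_lt_zero _)
      | succ n IH =>
        intro k hk
        rw [AobsP_eq]
        have he : (fun i (_ : i < k) => AobsP π g W V i ω) = fun i _ => a i := by
          funext i hi
          exact IH i (lt_of_lt_of_le hi (Nat.lt_succ_iff.mp hk))
        rw [he]; exact h k
    exact fun k => H K k k.isLt

lemma eventEq_AblockP [DecidableEq ι] (π : Fin K → ι)
    (g : (k : Fin K) → ((i : Fin K) → i < k → α) → ((i : Fin K) → π i = π k → γ) → β → α)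
    (W : Fin K → Ω → γ) (V : Fin K → Ω → β) (ξ : Fin K → Ω → α) (b : ι) (a : Fin K → α) :
    eventEq (AblockP π g W V ξ b) a
      = ⋂ k, {ω | if π k = b then ξ k ω = a k
          else g k (fun i _ => a i) (fun i _ => W i ω) (V k ω) = a k} := by
  ext ω
  simp only [eventEq, Set.mem_iInter, Set.mem_setOf_eq]
  constructor
  · intro h k
    have hk := h k
    rw [AblockP_eq] at hk
    by_cases hb : π k = b
    · rw [if_pos hb] at hk ⊢; exact hk
    · rw [if_neg hb] at hk ⊢
      have he : (fun i (_ : i < k) => AblockP π g W V ξ b i ω) = fun i _ => a i := by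
        funext i hi; exact h i
      rwa [he] at hk
  · intro h
    have H : ∀ n, ∀ k : Fin K, k.1 < n → AblockP π g W V ξ b k ω = a k := by
      intro n
      induction n with
      | zero => exact fun k hk => absurd hk (Nat.not_lt_zero _)
      | succ n IH =>
        intro k hk
        rw [AblockP_eq]
        by_cases hb : π k = b
        · rw [if_pos hb]
          have := h k; rwa [if_pos hb] at this
        · rw [if_neg hb]
          have he : (fun i (_ : i < k) => AblockP π g W V ξ b i ω) = fun i _ => a i := by
            funext i hi
            exact IH i (lt_of_lt_of_le hi (Nat.lt_succ_iff.mp hk))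
          rw [he]
          have := h k; rwa [if_neg hb] at this
    exact fun k => H K k k.isLt

end AuxLemmas


section Groups

/-- The group σ-algebra generated by a set of noise indices. -/
def grpMS {Ω α β γ : Type} {K : ℕ} [MeasurableSpace α] [MeasurableSpace β] [MeasurableSpace γ]
    (W : Fin K → Ω → γ) (V : Fin K → Ω → β) (ξ : Fin K → Ω → α) (U : Ω → ℝ)
    (p : Set (Fin K ⊕ Fin K ⊕ Fin K ⊕ Unit)) : MeasurableSpace Ω :=
  ⨆ j ∈ p, MeasurableSpace.comap (noiseFam W V ξ U j) (noiseMS K α β γ j)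

/-- Indices of the observational noises (`W`, `V`) of block `c`. -/
def pObsS {K : ℕ} {ι : Type} (π : Fin K → ι) (c : ι) : Set (Fin K ⊕ Fin K ⊕ Fin K ⊕ Unit) :=
  {j | ∃ k, π k = c ∧ (j = Sum.inl k ∨ j = Sum.inr (Sum.inl k))}

/-- Indices of the interventional noises (`ξ`) of block `c`. -/
def pXiS {K : ℕ} {ι : Type} (π : Fin K → ι) (c : ι) : Set (Fin K ⊕ Fin K ⊕ Fin K ⊕ Unit) :=
  {j | ∃ k, π k = c ∧ j = Sum.inr (Sum.inr (Sum.inl k))}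

/-- Index of the outcome noise `U`. -/
def pUS {K : ℕ} : Set (Fin K ⊕ Fin K ⊕ Fin K ⊕ Unit) :=
  {j | ∃ u, j = Sum.inr (Sum.inr (Sum.inr u))}

/-- The block event for the observational/blockwise mechanism equations. -/
def EcS {Ω α β γ : Type} {K : ℕ} {ι : Type} (π : Fin K → ι)
    (g : (k : Fin K) → ((i : Fin K) → i < k → α) → ((i : Fin K) → π i = π k → γ) → β → α)
    (W : Fin K → Ω → γ) (V : Fin K → Ω → β) (a : Fin K → α) (c : ι) : Set Ω :=
  {ω | ∀ k, π k = c → g k (fun i _ => a i) (fun i _ => W i ω) (V k ω) = a k}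

/-- The block event for the interventional actions. -/
def FcS {Ω α : Type} {K : ℕ} {ι : Type} (π : Fin K → ι)
    (ξ : Fin K → Ω → α) (a : Fin K → α) (c : ι) : Set Ω :=
  {ω | ∀ k, π k = c → ξ k ω = a k}

/-- The block summand of the outcome evaluated at the fixed action profile `a`. -/
def XfD {Ω α γ : Type} {K : ℕ} {ι : Type} (π : Fin K → ι)
    (f : (b : ι) → ((i : Fin K) → π i = b → α) → ((i : Fin K) → π i = b → γ) → ℝ)
    (W : Fin K → Ω → γ) (a : Fin K → α) (c : ι) : Ω → ℝ :=
  fun ω => f c (fun i _ => a i) (fun i _ => W i ω)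

variable {Ω α β γ : Type} {K : ℕ} {ι : Type} [mΩ : MeasurableSpace Ω]
  [Fintype α] [Nonempty α] [MeasurableSpace α] [MeasurableSingletonClass α]
  [Fintype β] [Nonempty β] [MeasurableSpace β] [MeasurableSingletonClass β]
  [Fintype γ] [Nonempty γ] [MeasurableSpace γ] [MeasurableSingletonClass γ]
  {π : Fin K → ι}
  {W : Fin K → Ω → γ} {V : Fin K → Ω → β} {ξ : Fin K → Ω → α} {U : Ω → ℝ}

lemma comap_le_grpMS {p : Set (Fin K ⊕ Fin K ⊕ Fin K ⊕ Unit)}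
    {j : Fin K ⊕ Fin K ⊕ Fin K ⊕ Unit} (hj : j ∈ p) :
    MeasurableSpace.comap (noiseFam W V ξ U j) (noiseMS K α β γ j) ≤ grpMS W V ξ U p :=
  le_iSup₂ (f := fun j (_ : j ∈ p) =>
    MeasurableSpace.comap (noiseFam W V ξ U j) (noiseMS K α β γ j)) j hj

lemma grpMS_le (hW : ∀ k, Measurable (W k)) (hV : ∀ k, Measurable (V k))
    (hξ : ∀ k, Measurable (ξ k)) (hU : Measurable U)
    (p : Set (Fin K ⊕ Fin K ⊕ Fin K ⊕ Unit)) : grpMS W V ξ U p ≤ mΩ := by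
  refine iSup₂_le fun j _ => ?_
  rcases j with k | k | k | u
  · exact measurable_iff_comap_le.mp (hW k)
  · exact measurable_iff_comap_le.mp (hV k)
  · exact measurable_iff_comap_le.mp (hξ k)
  · exact measurable_iff_comap_le.mp hU

lemma grpMS_mono {p p' : Set (Fin K ⊕ Fin K ⊕ Fin K ⊕ Unit)} (h : p ⊆ p') :
    grpMS W V ξ U p ≤ grpMS (Ω := Ω) W V ξ U p' :=
  iSup₂_le fun j hj => comap_le_grpMS (h hj)

lemma meas_W_grp {c : ι} {k : Fin K} (hk : π k = c) :
    Measurable[grpMS W V ξ U (pObsS π c)] (W k) :=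
  measurable_iff_comap_le.mpr (comap_le_grpMS (p := pObsS π c) (j := Sum.inl k) (by exact ⟨k, hk, Or.inl rfl⟩))

lemma meas_V_grp {c : ι} {k : Fin K} (hk : π k = c) :
    Measurable[grpMS W V ξ U (pObsS π c)] (V k) :=
  measurable_iff_comap_le.mpr (comap_le_grpMS (p := pObsS π c) (j := Sum.inr (Sum.inl k)) (by exact ⟨k, hk, Or.inr rfl⟩))

lemma meas_Xi_grp {c : ι} {k : Fin K} (hk : π k = c) :
    Measurable[grpMS W V ξ U (pXiS π c)] (ξ k) :=
  measurable_iff_comap_le.mpr (comap_le_grpMS (p := pXiS π c) (j := Sum.inr (Sum.inr (Sum.inl k))) (by exact ⟨k, hk, rfl⟩))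

lemma meas_U_grp : Measurable[grpMS W V ξ U (pUS (K := K))] U :=
  measurable_iff_comap_le.mpr (comap_le_grpMS (p := pUS (K := K)) (j := Sum.inr (Sum.inr (Sum.inr ()))) (by exact ⟨(), rfl⟩))

lemma measurable_pi_iff' {δ : Type} {X : δ → Type} [∀ i, MeasurableSpace (X i)]
    {Y : Type} {m : MeasurableSpace Y} {f : Y → ∀ i, X i} :
    Measurable[m] f ↔ ∀ i, Measurable[m] fun y => f y i := measurable_pi_iff

lemma meas_Wex_grp (c : ι) [DecidableEq ι] :
    Measurable[grpMS W V ξ U (pObsS π c)]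
      (fun ω (k : Fin K) => if π k = c then W k ω else Classical.arbitrary γ) := by
  rw [measurable_pi_iff']
  intro k
  by_cases hk : π k = c
  · simp only [if_pos hk]; exact meas_W_grp hk
  · simp only [if_neg hk]; exact measurable_const

lemma meas_Vex_grp (c : ι) [DecidableEq ι] :
    Measurable[grpMS W V ξ U (pObsS π c)]
      (fun ω (k : Fin K) => if π k = c then V k ω else Classical.arbitrary β) := by
  rw [measurable_pi_iff']
  intro k
  by_cases hk : π k = c
  · simp only [if_pos hk]; exact meas_V_grp hk
  · simp only [if_neg hk]; exact measurable_const

lemma meas_Xiex_grp (c : ι) [DecidableEq ι] :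
    Measurable[grpMS W V ξ U (pXiS π c)]
      (fun ω (k : Fin K) => if π k = c then ξ k ω else Classical.arbitrary α) := by
  rw [measurable_pi_iff']
  intro k
  by_cases hk : π k = c
  · simp only [if_pos hk]; exact meas_Xi_grp hk
  · simp only [if_neg hk]; exact measurable_const

lemma EcS_meas [DecidableEq ι]
    (g : (k : Fin K) → ((i : Fin K) → i < k → α) → ((i : Fin K) → π i = π k → γ) → β → α)
    (a : Fin K → α) (c : ι) :
    MeasurableSet[grpMS W V ξ U (pObsS π c)] (EcS π g W V a c) := by
  classical
  have hpair : Measurable[grpMS W V ξ U (pObsS π c)]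
      (fun ω => ((fun k => if π k = c then W k ω else Classical.arbitrary γ),
                 (fun k => if π k = c then V k ω else Classical.arbitrary β))) :=
    (meas_Wex_grp c).prodMk (meas_Vex_grp c)
  have hset : EcS π g W V a c = (fun ω =>
      ((fun k => if π k = c then W k ω else Classical.arbitrary γ),
       (fun k => if π k = c then V k ω else Classical.arbitrary β))) ⁻¹'
      {p : (Fin K → γ) × (Fin K → β) | ∀ k, π k = c →
        g k (fun i _ => a i) (fun i _ => p.1 i) (p.2 k) = a k} := by
    ext ω
    simp only [EcS, Set.mem_setOf_eq, Set.mem_preimage]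
    refine forall_congr' fun k => ?_
    constructor
    · intro h hk
      have h1 : (fun (i : Fin K) (_ : π i = π k) =>
          if π i = c then W i ω else Classical.arbitrary γ) = fun i _ => W i ω := by
        funext i hi; rw [if_pos (hi.trans hk)]
      rw [h1, if_pos hk]
      exact h hk
    · intro h hk
      have h1 : (fun (i : Fin K) (_ : π i = π k) =>
          if π i = c then W i ω else Classical.arbitrary γ) = fun i _ => W i ω := by
        funext i hi; rw [if_pos (hi.trans hk)]
      have h2 := h hk
      rwa [h1, if_pos hk] at h2
  rw [hset]
  exact hpair (Set.to_countable _).measurableSet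

lemma FcS_meas [DecidableEq ι] (a : Fin K → α) (c : ι) :
    MeasurableSet[grpMS W V ξ U (pXiS π c)] (FcS π ξ a c) := by
  classical
  have hset : FcS π ξ a c = (fun ω (k : Fin K) =>
      if π k = c then ξ k ω else Classical.arbitrary α) ⁻¹'
      {x : Fin K → α | ∀ k, π k = c → x k = a k} := by
    ext ω
    simp only [FcS, Set.mem_setOf_eq, Set.mem_preimage]
    refine forall_congr' fun k => ?_
    constructor
    · intro h hk; rw [if_pos hk]; exact h hk
    · intro h hk; have := h hk; rwa [if_pos hk] at this
  rw [hset]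
  exact (meas_Xiex_grp c) (Set.to_countable _).measurableSet

lemma XfD_meas [DecidableEq ι]
    (f : (b : ι) → ((i : Fin K) → π i = b → α) → ((i : Fin K) → π i = b → γ) → ℝ)
    (a : Fin K → α) (c : ι) :
    Measurable[grpMS W V ξ U (pObsS π c)] (XfD π f W a c) := by
  classical
  have hrw : XfD π f W a c = (fun w : Fin K → γ => f c (fun i _ => a i) (fun i _ => w i)) ∘
      (fun ω (k : Fin K) => if π k = c then W k ω else Classical.arbitrary γ) := by
    funext ω
    have h2 : (fun (i : Fin K) (_ : π i = c) => W i ω)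
        = (fun i _ => if π i = c then W i ω else Classical.arbitrary γ) := by
      funext i hi; rw [if_pos hi]
    show f c (fun i _ => a i) (fun i _ => W i ω)
      = f c (fun i _ => a i) (fun i _ => if π i = c then W i ω else Classical.arbitrary γ)
    rw [h2]
  rw [hrw]
  exact (measurable_of_countable _).comp (meas_Wex_grp c)

lemma XfD_int (P : Measure Ω) [IsProbabilityMeasure P] (hW : ∀ k, Measurable (W k))
    (f : (b : ι) → ((i : Fin K) → π i = b → α) → ((i : Fin K) → π i = b → γ) → ℝ)
    (a : Fin K → α) (c : ι) :
    Integrable (XfD π f W a c) P := by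
  have hm : Measurable (XfD π f W a c) :=
    (measurable_of_countable (fun w : Fin K → γ => f c (fun i _ => a i) (fun i _ => w i))).comp
      (measurable_pi_lambda _ fun k => hW k)
  obtain ⟨w₀, hw₀⟩ := Finite.exists_max
    (fun w : Fin K → γ => |f c (fun i _ => a i) (fun i _ => w i)|)
  refine (integrable_const (|f c (fun i _ => a i) (fun i _ => w₀ i)|)).mono'
    hm.aestronglyMeasurable ?_
  filter_upwards with ω
  simpa [XfD, Real.norm_eq_abs] using hw₀ (fun k => W k ω)

lemma pdisj_qq [DecidableEq ι] {c c' : ι} (h : c ≠ c') :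
    Disjoint (pObsS π c ∪ pXiS π c) (pObsS π c' ∪ pXiS π c') := by
  rw [Set.disjoint_left]
  rintro j (⟨k, hk, (rfl | rfl)⟩ | ⟨k, hk, rfl⟩) <;>
    rintro (⟨k', hk', (h' | h')⟩ | ⟨k', hk', h'⟩) <;> simp_all

lemma pdisj_oxi {c c' : ι} : Disjoint (pObsS π c) (pXiS π c') := by
  rw [Set.disjoint_left]
  rintro j ⟨k, hk, (rfl | rfl)⟩ ⟨k', hk', h'⟩ <;> simp_all

lemma pdisj_qU {c : ι} : Disjoint (pObsS π c ∪ pXiS π c) (pUS (K := K)) := by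
  rw [Set.disjoint_left]
  rintro j (⟨k, hk, (rfl | rfl)⟩ | ⟨k, hk, rfl⟩) ⟨u, h'⟩ <;> simp_all

end Groups


section Eval

variable {Ω : Type} [mΩ : MeasurableSpace Ω] {P : Measure Ω} [IsProbabilityMeasure P]
  {K : ℕ} {α β γ : Type}
  [Fintype α] [Nonempty α] [MeasurableSpace α] [MeasurableSingletonClass α]
  [Fintype β] [Nonempty β] [MeasurableSpace β] [MeasurableSingletonClass β]
  [Fintype γ] [Nonempty γ] [MeasurableSpace γ] [MeasurableSingletonClass γ]
  {ι : Type} [Fintype ι] [DecidableEq ι]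
  {π : Fin K → ι}
  {W : Fin K → Ω → γ} {V : Fin K → Ω → β} {ξ : Fin K → Ω → α} {U : Ω → ℝ}

/-- Main evaluation: the conditional expectation of the outcome given an event that is an
intersection of per-block events decomposes as a sum of per-block conditional terms. -/
lemma cond_outcome_eval
    (hW : ∀ k, Measurable (W k)) (hV : ∀ k, Measurable (V k))
    (hξ : ∀ k, Measurable (ξ k)) (hU : Measurable U)
    (hindep : iIndepFun (m := noiseMS K α β γ) (noiseFam W V ξ U) P)
    (hUint : Integrable U P) (hU0 : ∫ ω, U ω ∂P = 0)
    (f : (b : ι) → ((i : Fin K) → π i = b → α) → ((i : Fin K) → π i = b → γ) → ℝ)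
    (a : Fin K → α) (G : ι → Set Ω)
    (hGm : ∀ c, MeasurableSet[grpMS W V ξ U (pObsS π c ∪ pXiS π c)] (G c))
    (A : Fin K → Ω → α) (hev : eventEq A a = ⋂ c, G c) (hpos : P (⋂ c, G c) ≠ 0) :
    ∫ ω, outcomeP π f A W U ω ∂(P[|eventEq A a])
      = ∑ c, (P (G c)).toReal⁻¹ * ∫ ω in G c, XfD π f W a c ω ∂P := by
  classical
  have hle : ∀ p, grpMS W V ξ U p ≤ mΩ := grpMS_le hW hV hξ hU
  have hIndepG : ∀ p p', Disjoint p p' →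
      ProbabilityTheory.Indep (grpMS W V ξ U p) (grpMS W V ξ U p') P :=
    fun p p' h => indep_iSup_of_disjoint
      (fun j => measurable_iff_comap_le.mp (by
        rcases j with k | k | k | u
        · exact hW k
        · exact hV k
        · exact hξ k
        · exact hU)) hindep.iIndep h
  have hGamb : ∀ c, MeasurableSet (G c) := fun c => hle _ _ (hGm c)
  have hSamb : MeasurableSet (⋂ c, G c) := MeasurableSet.iInter fun c => hGamb c
  have hXint : ∀ c, Integrable (XfD π f W a c) P := fun c => XfD_int P hW f a c
  rw [hev, cond_integral_s14]
  have hcong : Set.EqOn (outcomeP π f A W U)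
      (fun ω => (∑ c, XfD π f W a c ω) + U ω) (⋂ c, G c) := by
    intro ω hω
    have hω' : ω ∈ eventEq A a := by rw [hev]; exact hω
    have hA : ∀ i, A i ω = a i := fun i => Set.mem_iInter.mp hω' i
    show (∑ b, f b (fun i _ => A i ω) (fun i _ => W i ω)) + U ω = _
    congr 1
    refine Finset.sum_congr rfl fun c _ => ?_
    have hAa : (fun (i : Fin K) (_ : π i = c) => A i ω) = fun i _ => a i := by
      funext i hi; exact hA i
    show f c (fun i _ => A i ω) (fun i _ => W i ω) = f c (fun i _ => a i) (fun i _ => W i ω)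
    rw [hAa]
  rw [setIntegral_congr_fun hSamb hcong]
  rw [integral_add ((integrable_finset_sum _ fun c _ => hXint c).integrableOn)
    hUint.integrableOn]
  rw [integral_finset_sum _ fun c _ => (hXint c).integrableOn]
  rw [mul_add, Finset.mul_sum]
  have hUterm : (P (⋂ c, G c)).toReal⁻¹ * ∫ ω in ⋂ c, G c, U ω ∂P = 0 := by
    have hT2 : MeasurableSet[grpMS W V ξ U (⋃ c, (pObsS π c ∪ pXiS π c))] (⋂ c, G c) :=
      MeasurableSet.iInter fun c =>
        grpMS_mono (Set.subset_iUnion (fun c => pObsS π c ∪ pXiS π c) c) _ (hGm c)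
    have hdisjU : Disjoint (pUS (K := K)) (⋃ c, (pObsS π c ∪ pXiS π c)) :=
      Set.disjoint_iUnion_right.mpr fun c => (pdisj_qU (π := π)).symm
    have hkey := key_aux P (hle pUS) (hle _) (hIndepG _ _ hdisjU) meas_U_grp hUint
      MeasurableSet.univ hT2 (by rwa [Set.univ_inter])
    rw [Set.univ_inter] at hkey
    rw [hkey]
    simp [hU0]
  rw [hUterm, add_zero]
  refine Finset.sum_congr rfl fun c _ => ?_
  have hsplit : (⋂ c', G c') = G c ∩ ⋂ c' ∈ ({c}ᶜ : Set ι), G c' := by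
    ext ω
    simp only [Set.mem_iInter, Set.mem_inter_iff, Set.mem_compl_iff, Set.mem_singleton_iff]
    constructor
    · exact fun h => ⟨h c, fun c' _ => h c'⟩
    · intro h c'
      by_cases hc : c' = c
      · rw [hc]; exact h.1
      · exact h.2 c' hc
  have hT2 : MeasurableSet[grpMS W V ξ U (⋃ c' ∈ ({c}ᶜ : Set ι), (pObsS π c' ∪ pXiS π c'))]
      (⋂ c' ∈ ({c}ᶜ : Set ι), G c') :=
    MeasurableSet.biInter (Set.to_countable _) fun c' hc' =>
      grpMS_mono (Set.subset_biUnion_of_mem hc') _ (hGm c')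
  have hdisj : Disjoint (pObsS π c ∪ pXiS π c)
      (⋃ c' ∈ ({c}ᶜ : Set ι), (pObsS π c' ∪ pXiS π c')) :=
    Set.disjoint_iUnion_right.mpr fun c' =>
      Set.disjoint_iUnion_right.mpr fun hc' => pdisj_qq (Ne.symm hc')
  have hXm : Measurable[grpMS W V ξ U (pObsS π c ∪ pXiS π c)] (XfD π f W a c) :=
    (XfD_meas f a c).mono (grpMS_mono Set.subset_union_left) le_rfl
  rw [hsplit]
  exact key_aux P (hle _) (hle _) (hIndepG _ _ hdisj) hXm (hXint c) (hGm c) hT2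
    (by rw [← hsplit]; exact hpos)

/-- Independence of the block summand from the interventional-noise event. -/
lemma F_term_eval
    (hW : ∀ k, Measurable (W k)) (hV : ∀ k, Measurable (V k))
    (hξ : ∀ k, Measurable (ξ k)) (hU : Measurable U)
    (hindep : iIndepFun (m := noiseMS K α β γ) (noiseFam W V ξ U) P)
    (f : (b : ι) → ((i : Fin K) → π i = b → α) → ((i : Fin K) → π i = b → γ) → ℝ)
    (a : Fin K → α) (c : ι) (hpos : P (FcS π ξ a c) ≠ 0) :
    (P (FcS π ξ a c)).toReal⁻¹ * ∫ ω in FcS π ξ a c, XfD π f W a c ω ∂P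
      = ∫ ω, XfD π f W a c ω ∂P := by
  classical
  have hle : ∀ p, grpMS W V ξ U p ≤ mΩ := grpMS_le hW hV hξ hU
  have hIndepG : ProbabilityTheory.Indep (grpMS W V ξ U (pObsS π c))
      (grpMS W V ξ U (pXiS π c)) P :=
    indep_iSup_of_disjoint
      (fun j => measurable_iff_comap_le.mp (by
        rcases j with k | k | k | u
        · exact hW k
        · exact hV k
        · exact hξ k
        · exact hU)) hindep.iIndep (pdisj_oxi (π := π))
  have hkey := key_aux P (hle (pObsS π c)) (hle (pXiS π c)) hIndepG (XfD_meas f a c)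
    (XfD_int P hW f a c) MeasurableSet.univ (FcS_meas a c) (by rwa [Set.univ_inter])
  rw [Set.univ_inter] at hkey
  rw [hkey]
  simp

end Eval

/-- **Corollary 1 (discrete, constructive form): additivity w.r.t. a partition.**
If the outcome mechanism is additive with respect to a partition `𝔅` of the actions
(blocks given as fibers of a surjective map `π : Fin K → ι`), then under the support
condition any estimator family fitted to the observational and per-block joint
interventional conditional expectations identifies the joint interventional effect. -/
theorem joint_effect_identifiable_of_partition_additive
    {Ω : Type} [MeasurableSpace Ω] (P : Measure Ω) [IsProbabilityMeasure P]
    {K : ℕ} (hK : 1 ≤ K)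
    {α β γ : Type} [Fintype α] [Nonempty α] [MeasurableSpace α] [MeasurableSingletonClass α]
    [Fintype β] [Nonempty β] [MeasurableSpace β] [MeasurableSingletonClass β]
    [Fintype γ] [Nonempty γ] [MeasurableSpace γ] [MeasurableSingletonClass γ]
    {ι : Type} [Fintype ι] [Nonempty ι] [DecidableEq ι]
    (π : Fin K → ι) (hπ : Function.Surjective π)
    (W : Fin K → Ω → γ) (V : Fin K → Ω → β) (ξ : Fin K → Ω → α) (U : Ω → ℝ)
    (hW : ∀ k, Measurable (W k)) (hV : ∀ k, Measurable (V k))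
    (hξ : ∀ k, Measurable (ξ k)) (hU : Measurable U)
    (hindep : iIndepFun (m := noiseMS K α β γ) (noiseFam W V ξ U) P)
    (hUint : Integrable U P) (hU0 : ∫ ω, U ω ∂P = 0)
    (g : (k : Fin K) → ((i : Fin K) → i < k → α) → ((i : Fin K) → π i = π k → γ) → β → α)
    (f : (b : ι) → ((i : Fin K) → π i = b → α) → ((i : Fin K) → π i = b → γ) → ℝ)
    (hsupJ : ∀ a : Fin K → α,
      0 < P (eventEq (AobsP π g W V) a) ↔ 0 < P (eventEq ξ a))
    (hsupB : ∀ (b : ι) (a : Fin K → α),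
      0 < P (eventEq (AobsP π g W V) a) ↔ 0 < P (eventEq (AblockP π g W V ξ b) a))
    (fhat : ι → (Fin K → α) → Bool → ℝ)
    (hfitObs : ∀ a : Fin K → α, 0 < P (eventEq (AobsP π g W V) a) →
      ∑ b : ι, fhat b a false
        = ∫ ω, outcomeP π f (AobsP π g W V) W U ω ∂(P[|eventEq (AobsP π g W V) a]))
    (hfitBlock : ∀ (b : ι) (a : Fin K → α),
      0 < P (eventEq (AblockP π g W V ξ b) a) →
      fhat b a true + ∑ b' ∈ Finset.univ.erase b, fhat b' a false
        = ∫ ω, outcomeP π f (AblockP π g W V ξ b) W U ω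
            ∂(P[|eventEq (AblockP π g W V ξ b) a])) :
    ∀ a : Fin K → α, 0 < P (eventEq ξ a) →
      ∑ b : ι, fhat b a true
        = ∫ ω, outcomeP π f ξ W U ω ∂(P[|eventEq ξ a]) := by
  classical
  intro a ha
  have hObs : 0 < P (eventEq (AobsP π g W V) a) := (hsupJ a).mpr ha
  have hObsNe : P (eventEq (AobsP π g W V) a) ≠ 0 := hObs.ne'
  have hEev : eventEq (AobsP π g W V) a = ⋂ c, EcS π g W V a c := by
    rw [eventEq_AobsP]
    ext ω
    simp only [Set.mem_iInter, Set.mem_setOf_eq, EcS]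
    exact ⟨fun h c k hk => h k, fun h k => h (π k) k rfl⟩
  have hJev : eventEq ξ a = ⋂ c, FcS π ξ a c := by
    ext ω
    simp only [eventEq, Set.mem_iInter, Set.mem_setOf_eq, FcS]
    exact ⟨fun h c k hk => h k, fun h k => h (π k) k rfl⟩
  have hBev : ∀ b, eventEq (AblockP π g W V ξ b) a
      = ⋂ c, (if c = b then FcS π ξ a c else EcS π g W V a c) := by
    intro b
    rw [eventEq_AblockP]
    ext ω
    simp only [Set.mem_iInter, Set.mem_setOf_eq]
    constructor
    · intro h c
      by_cases hcb : c = b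
      · rw [if_pos hcb]
        intro k hk
        have hx := h k
        rwa [if_pos (hk.trans hcb)] at hx
      · rw [if_neg hcb]
        intro k hk
        have hx := h k
        rwa [if_neg (fun hb => hcb (hk.symm.trans hb))] at hx
    · intro h k
      by_cases hb : π k = b
      · rw [if_pos hb]
        have hx := h b
        rw [if_pos rfl] at hx
        exact hx k hb
      · rw [if_neg hb]
        have hx := h (π k)
        rw [if_neg hb] at hx
        exact hx k rfl
  have hGmObs : ∀ c, MeasurableSet[grpMS W V ξ U (pObsS π c ∪ pXiS π c)]
      (EcS π g W V a c) :=
    fun c => grpMS_mono Set.subset_union_left _ (EcS_meas g a c)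
  have hGmXi : ∀ c, MeasurableSet[grpMS W V ξ U (pObsS π c ∪ pXiS π c)] (FcS π ξ a c) :=
    fun c => grpMS_mono Set.subset_union_right _ (FcS_meas a c)
  have hFpos : ∀ c, P (FcS π ξ a c) ≠ 0 := by
    intro c
    have hsub : eventEq ξ a ⊆ FcS π ξ a c := by
      rw [hJev]; exact Set.iInter_subset _ c
    exact (lt_of_lt_of_le ha (measure_mono hsub)).ne'
  have hO := hfitObs a hObs
  rw [cond_outcome_eval hW hV hξ hU hindep hUint hU0 f a (fun c => EcS π g W V a c)
      hGmObs (AobsP π g W V) hEev (by rw [← hEev]; exact hObsNe)] at hO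
  have hB : ∀ b, fhat b a true + ∑ b' ∈ Finset.univ.erase b, fhat b' a false
      = (∫ ω, XfD π f W a b ω ∂P) + ∑ c ∈ Finset.univ.erase b,
        (P (EcS π g W V a c)).toReal⁻¹ * ∫ ω in EcS π g W V a c, XfD π f W a c ω ∂P := by
    intro b
    have hBpos : 0 < P (eventEq (AblockP π g W V ξ b) a) := (hsupB b a).mp hObs
    have h1 := hfitBlock b a hBpos
    rw [cond_outcome_eval hW hV hξ hU hindep hUint hU0 f a
        (fun c => if c = b then FcS π ξ a c else EcS π g W V a c)
        (fun c => by
          show MeasurableSet[grpMS W V ξ U (pObsS π c ∪ pXiS π c)]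
            (if c = b then FcS π ξ a c else EcS π g W V a c)
          by_cases hcb : c = b
          · rw [if_pos hcb]; exact hGmXi c
          · rw [if_neg hcb]; exact hGmObs c)
        (AblockP π g W V ξ b) (hBev b) (by rw [← hBev b]; exact hBpos.ne')] at h1
    rw [h1]
    rw [← Finset.add_sum_erase _ _ (Finset.mem_univ b)]
    congr 1
    · rw [if_pos rfl]
      exact F_term_eval hW hV hξ hU hindep f a b (hFpos b)
    · refine Finset.sum_congr rfl fun c hc => ?_
      rw [if_neg (Finset.ne_of_mem_erase hc)]
  have hJ : ∫ ω, outcomeP π f ξ W U ω ∂(P[|eventEq ξ a])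
      = ∑ c, ∫ ω, XfD π f W a c ω ∂P := by
    rw [cond_outcome_eval hW hV hξ hU hindep hUint hU0 f a (fun c => FcS π ξ a c)
        hGmXi ξ hJev (by rw [← hJev]; exact ha.ne')]
    exact Finset.sum_congr rfl fun c _ => F_term_eval hW hV hξ hU hindep f a c (hFpos c)
  rw [hJ]
  have hkey : ∀ b, fhat b a true = (∫ ω, XfD π f W a b ω ∂P)
      - ((P (EcS π g W V a b)).toReal⁻¹ * ∫ ω in EcS π g W V a b, XfD π f W a b ω ∂P)
      + fhat b a false := by
    intro b
    have h1 := hB b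
    have e1 : ∑ b' ∈ Finset.univ.erase b, fhat b' a false
        = (∑ c, fhat c a false) - fhat b a false := by
      rw [← Finset.add_sum_erase _ _ (Finset.mem_univ b)]; ring
    have e2 : ∑ c ∈ Finset.univ.erase b, ((P (EcS π g W V a c)).toReal⁻¹ *
          ∫ ω in EcS π g W V a c, XfD π f W a c ω ∂P)
        = (∑ c, (P (EcS π g W V a c)).toReal⁻¹ *
          ∫ ω in EcS π g W V a c, XfD π f W a c ω ∂P)
          - ((P (EcS π g W V a b)).toReal⁻¹ *
          ∫ ω in EcS π g W V a b, XfD π f W a b ω ∂P) := by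
      rw [← Finset.add_sum_erase _ _ (Finset.mem_univ b)]; ring
    rw [e1, e2, hO] at h1
    linarith
  calc ∑ b, fhat b a true
      = ∑ b, ((∫ ω, XfD π f W a b ω ∂P)
        - ((P (EcS π g W V a b)).toReal⁻¹ * ∫ ω in EcS π g W V a b, XfD π f W a b ω ∂P)
        + fhat b a false) := Finset.sum_congr rfl fun b _ => hkey b
    _ = ∑ c, ∫ ω, XfD π f W a c ω ∂P := by
        rw [Finset.sum_add_distrib, Finset.sum_sub_distrib, hO]
        ring
end

section
/- The observational joint distributions of (Y, A₁, A₂) under model M and model M̃ coincide: for all y, a₁, a₂ : Bool, P(Y = y ∧ A₁ = a₁ ∧ A₂ = a₂) computed in M equals the same probability computed in M̃. Explicitly, both equal: (1−p) for (y,a₁,a₂) = (false,false,false); p(1−p) for (false,true,false); p²(1−p) for (false,true,true); p³ for (true,true,true); and 0 otherwise. -/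
/-- The confounder `C := W`. -/
def Cc {Ω : Type} (W : Ω → Bool) (ω : Ω) : Bool := W ω

/-- The first action `A₁ := C`. -/
def A1 {Ω : Type} (W : Ω → Bool) (ω : Ω) : Bool := Cc W ω

/-- The second action `A₂ := A₁ && C && V₂`. -/
def A2 {Ω : Type} (V2 W : Ω → Bool) (ω : Ω) : Bool := A1 W ω && Cc W ω && V2 ω

/-- The outcome of model `M`: `Y := A₁ && A₂ && C && U`. -/
def YM {Ω : Type} (U V2 W : Ω → Bool) (ω : Ω) : Bool :=
  A1 W ω && A2 V2 W ω && Cc W ω && U ω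

/-- The outcome of model `M̃`: `Y := A₂ && C && U`. -/
def YMt {Ω : Type} (U V2 W : Ω → Bool) (ω : Ω) : Bool :=
  A2 V2 W ω && Cc W ω && U ω

/-- The common observational distribution table of Example 1. -/
noncomputable def obsTable (p : ℝ) : Bool → Bool → Bool → ENNReal
  | false, false, false => ENNReal.ofReal (1 - p)
  | false, true,  false => ENNReal.ofReal (p * (1 - p))
  | false, true,  true  => ENNReal.ofReal (p ^ 2 * (1 - p))
  | true,  true,  true  => ENNReal.ofReal (p ^ 3)
  | _, _, _ => 0

/-- **Example 1, observational part.** The models `M` and `M̃` induce the same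
observational distribution of `(Y, A₁, A₂)`, given explicitly by `obsTable`. -/
theorem example_observational_distributions_agree
    (p : ℝ) (hp0 : 0 ≤ p) (hp1 : p ≤ 1)
    {Ω : Type} [MeasurableSpace Ω] (P : MeasureTheory.Measure Ω)
    [MeasureTheory.IsProbabilityMeasure P]
    (U V2 W : Ω → Bool) (hU : Measurable U) (hV2 : Measurable V2) (hW : Measurable W)
    (hindep : ProbabilityTheory.iIndepFun
      ![U, V2, W] P)
    (hpU : P {ω | U ω = true} = ENNReal.ofReal p)
    (hpV : P {ω | V2 ω = true} = ENNReal.ofReal p)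
    (hpW : P {ω | W ω = true} = ENNReal.ofReal p) :
    ∀ y a1 a2 : Bool,
      P {ω | YM U V2 W ω = y ∧ A1 W ω = a1 ∧ A2 V2 W ω = a2}
          = P {ω | YMt U V2 W ω = y ∧ A1 W ω = a1 ∧ A2 V2 W ω = a2}
        ∧ P {ω | YM U V2 W ω = y ∧ A1 W ω = a1 ∧ A2 V2 W ω = a2}
          = obsTable p y a1 a2 := by
  have hq1 : ENNReal.ofReal p ≤ 1 := by
    rw [← ENNReal.ofReal_one]; exact ENNReal.ofReal_le_ofReal hp1
  have hone : ENNReal.ofReal (1 - p) = 1 - ENNReal.ofReal p := by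
    rw [ENNReal.ofReal_sub _ hp0, ENNReal.ofReal_one]
  -- marginal for `false`
  have hmf : ∀ (X : Ω → Bool), Measurable X → P {ω | X ω = true} = ENNReal.ofReal p →
      P {ω | X ω = false} = 1 - ENNReal.ofReal p := by
    intro X hX hXt
    have hset : {ω | X ω = false} = {ω | X ω = true}ᶜ := by
      ext ω; simp
    have hm : MeasurableSet {ω | X ω = true} := hX (MeasurableSet.singleton true)
    rw [hset, MeasureTheory.prob_compl_eq_one_sub hm, hXt]
  have hUf := hmf U hU hpU
  have hVf := hmf V2 hV2 hpV
  have hWf := hmf W hW hpW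
  -- three-variable product formula
  have key : ∀ b1 b2 b3 : Bool,
      P {ω | U ω = b1 ∧ V2 ω = b2 ∧ W ω = b3}
        = P {ω | U ω = b1} * P {ω | V2 ω = b2} * P {ω | W ω = b3} := by
    intro b1 b2 b3
    have h := hindep.measure_inter_preimage_eq_mul (Finset.univ : Finset (Fin 3))
      (sets := fun i => ({![b1, b2, b3] i} : Set Bool))
      (fun i _ => MeasurableSet.singleton _)
    simpa [Set.preimage, Fin.prod_univ_three, Set.iInter_setOf,
      Fin.forall_fin_succ, and_assoc, mul_assoc,
      Matrix.cons_val_zero, Matrix.cons_val_one, Matrix.head_cons,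
      Set.mem_singleton_iff] using h
  -- two-variable product formula for (V2, W)
  have key2 : ∀ b2 b3 : Bool,
      P {ω | V2 ω = b2 ∧ W ω = b3} = P {ω | V2 ω = b2} * P {ω | W ω = b3} := by
    intro b2 b3
    have hind2 : ProbabilityTheory.IndepFun V2 W P := by
      have := hindep.indepFun (i := 1) (j := 2) (by decide)
      simpa [Matrix.cons_val_one, Matrix.head_cons] using this
    have h := hind2.measure_inter_preimage_eq_mul ({b2} : Set Bool) ({b3} : Set Bool)
      (MeasurableSet.singleton _) (MeasurableSet.singleton _)
    simpa [Set.preimage, Set.inter_def, Set.mem_singleton_iff] using h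
  -- The two outcome functions agree pointwise
  have hYeq : ∀ ω, YM U V2 W ω = YMt U V2 W ω := by
    intro ω
    simp only [YM, YMt, A1, A2, Cc]
    cases W ω <;> cases V2 ω <;> cases U ω <;> rfl
  intro y a1 a2
  constructor
  · congr 1
    ext ω
    simp [hYeq ω]
  · -- compute the measure for each case
    have hsimp : ∀ ω, (YM U V2 W ω = y ∧ A1 W ω = a1 ∧ A2 V2 W ω = a2) ↔
        ((W ω && V2 ω && U ω) = y ∧ W ω = a1 ∧ (W ω && V2 ω) = a2) := by
      intro ω
      simp only [YM, A1, A2, Cc]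
      cases W ω <;> cases V2 ω <;> cases U ω <;> simp
    have hset : {ω | YM U V2 W ω = y ∧ A1 W ω = a1 ∧ A2 V2 W ω = a2}
        = {ω | (W ω && V2 ω && U ω) = y ∧ W ω = a1 ∧ (W ω && V2 ω) = a2} := by
      ext ω; exact hsimp ω
    rw [hset]
    cases y <;> cases a1 <;> cases a2
    · -- (false, false, false) : event is {W = false}
      have : {ω | (W ω && V2 ω && U ω) = false ∧ W ω = false ∧ (W ω && V2 ω) = false}
          = {ω | W ω = false} := by
        ext ω; cases hw : W ω <;> simp [hw]
      rw [this, hWf]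
      simp [obsTable, hone]
    · -- (false, false, true) : empty
      have : {ω | (W ω && V2 ω && U ω) = false ∧ W ω = false ∧ (W ω && V2 ω) = true}
          = (∅ : Set Ω) := by
        ext ω; cases hw : W ω <;> simp [hw]
      rw [this]
      simp [obsTable]
    · -- (false, true, false) : {V2 = false ∧ W = true}
      have : {ω | (W ω && V2 ω && U ω) = false ∧ W ω = true ∧ (W ω && V2 ω) = false}
          = {ω | V2 ω = false ∧ W ω = true} := by
        ext ω; cases hw : W ω <;> cases hv : V2 ω <;> simp [hw, hv]
      rw [this, key2, hVf, hpW]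
      simp [obsTable, ENNReal.ofReal_mul hp0, hone, mul_comm]
    · -- (false, true, true) : {U = false ∧ V2 = true ∧ W = true}
      have : {ω | (W ω && V2 ω && U ω) = false ∧ W ω = true ∧ (W ω && V2 ω) = true}
          = {ω | U ω = false ∧ V2 ω = true ∧ W ω = true} := by
        ext ω; cases hw : W ω <;> cases hv : V2 ω <;> cases hu : U ω <;> simp [hw, hv, hu]
      rw [this, key, hUf, hpV, hpW]
      have : ENNReal.ofReal (p ^ 2 * (1 - p))
          = (1 - ENNReal.ofReal p) * ENNReal.ofReal p * ENNReal.ofReal p := by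
        rw [ENNReal.ofReal_mul (by positivity), ENNReal.ofReal_pow hp0, hone]
        ring
      simp [obsTable, this]
    · -- (true, false, false) : empty
      have : {ω | (W ω && V2 ω && U ω) = true ∧ W ω = false ∧ (W ω && V2 ω) = false}
          = (∅ : Set Ω) := by
        ext ω; cases hw : W ω <;> simp [hw]
      rw [this]; simp [obsTable]
    · -- (true, false, true) : empty
      have : {ω | (W ω && V2 ω && U ω) = true ∧ W ω = false ∧ (W ω && V2 ω) = true}
          = (∅ : Set Ω) := by
        ext ω; cases hw : W ω <;> simp [hw]
      rw [this]; simp [obsTable]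
    · -- (true, true, false) : empty
      have : {ω | (W ω && V2 ω && U ω) = true ∧ W ω = true ∧ (W ω && V2 ω) = false}
          = (∅ : Set Ω) := by
        ext ω; cases hw : W ω <;> cases hv : V2 ω <;> simp [hw, hv]
      rw [this]; simp [obsTable]
    · -- (true, true, true) : {U = true ∧ V2 = true ∧ W = true}
      have : {ω | (W ω && V2 ω && U ω) = true ∧ W ω = true ∧ (W ω && V2 ω) = true}
          = {ω | U ω = true ∧ V2 ω = true ∧ W ω = true} := by
        ext ω; cases hw : W ω <;> cases hv : V2 ω <;> cases hu : U ω <;> simp [hw, hv, hu]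
      rw [this, key, hpU, hpV, hpW]
      have : ENNReal.ofReal (p ^ 3) = ENNReal.ofReal p * ENNReal.ofReal p * ENNReal.ofReal p := by
        rw [ENNReal.ofReal_pow hp0]; ring
      simp [obsTable, this]
end

section
/- Assume 0 < p < 1. Under the joint intervention do(A₁ = false, A₂ = true) — i.e., in model M the outcome becomes Y_M := false && true && C && U and in model M̃ it becomes Y_M̃ := true && C && U — the two models disagree on the interventional distribution of Y: P(Y_M = true) = 0, P(Y_M̃ = true) = p², and hence P(Y_M = true) ≠ P(Y_M̃ = true). Consequently, two structural models can agree on all observational and single-intervention distributions of (Y, A₁, A₂) while disagreeing on a joint interventional distribution. -/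
/-- The outcome of model `M` under the joint intervention `do(A₁ = false, A₂ = true)`:
`Y := false && true && C && U`. -/
def YMjoint {Ω : Type} (U V2 W : Ω → Bool) (ω : Ω) : Bool :=
  false && true && Cc W ω && U ω

/-- The outcome of model `M̃` under the joint intervention `do(A₁ = false, A₂ = true)`:
`Y := true && C && U`. -/
def YMtjoint {Ω : Type} (U V2 W : Ω → Bool) (ω : Ω) : Bool :=
  true && Cc W ω && U ω

/-- **Example 1, conclusion (non-identifiability).** Under the joint intervention
`do(A₁ = false, A₂ = true)`, the two models disagree on the distribution of `Y`:
model `M` gives probability `0` to `Y = true` while `M̃` gives `p² > 0`. -/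
theorem example_joint_interventions_disagree
    (p : ℝ) (hp0 : 0 < p) (hp1 : p < 1)
    {Ω : Type} [MeasurableSpace Ω] (P : MeasureTheory.Measure Ω)
    [MeasureTheory.IsProbabilityMeasure P]
    (U V2 W : Ω → Bool) (hU : Measurable U) (hV2 : Measurable V2) (hW : Measurable W)
    (hindep : ProbabilityTheory.iIndepFun
      (m := fun _ : Fin 3 => (inferInstance : MeasurableSpace Bool)) ![U, V2, W] P)
    (hpU : P {ω | U ω = true} = ENNReal.ofReal p)
    (hpV : P {ω | V2 ω = true} = ENNReal.ofReal p)
    (hpW : P {ω | W ω = true} = ENNReal.ofReal p) :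
    P {ω | YMjoint U V2 W ω = true} = 0
      ∧ P {ω | YMtjoint U V2 W ω = true} = ENNReal.ofReal (p ^ 2)
      ∧ P {ω | YMjoint U V2 W ω = true}
          ≠ P {ω | YMtjoint U V2 W ω = true} := by
  have h0 : P {ω | YMjoint U V2 W ω = true} = 0 := by
    have : {ω | YMjoint U V2 W ω = true} = (∅ : Set Ω) := by
      ext ω; simp [YMjoint]
    simp [this]
  have hUW : ProbabilityTheory.IndepFun U W P := hindep.indepFun (by decide : (0 : Fin 3) ≠ 2)
  have hset : {ω | YMtjoint U V2 W ω = true} = {ω | W ω = true} ∩ {ω | U ω = true} := by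
    ext ω; simp [YMtjoint, Cc, Set.mem_inter_iff, and_comm]
  have h2 : P {ω | YMtjoint U V2 W ω = true} = ENNReal.ofReal (p ^ 2) := by
    rw [hset]
    have := (ProbabilityTheory.indepFun_iff_measure_inter_preimage_eq_mul.mp hUW.symm)
      {true} {true} (MeasurableSet.singleton true) (MeasurableSet.singleton true)
    have heq : {ω | W ω = true} ∩ {ω | U ω = true}
        = W ⁻¹' {true} ∩ U ⁻¹' {true} := by ext ω; simp [Set.mem_inter_iff]
    rw [heq, this]
    have hW' : P (W ⁻¹' {true}) = ENNReal.ofReal p := hpW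
    have hU' : P (U ⁻¹' {true}) = ENNReal.ofReal p := hpU
    rw [hW', hU', ← ENNReal.ofReal_mul hp0.le, sq]
  refine ⟨h0, h2, ?_⟩
  rw [h0, h2]
  intro h
  have : (0:ℝ) < p ^ 2 := by positivity
  exact absurd h.symm (by simp [ENNReal.ofReal_eq_zero]; linarith)
end
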